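/- arXiv:2507.02161 — 4 statements merged into one kernel-verified Lean document; each statement's English description precedes it below -/
import Mathlib

section
/- Let C_n be the cycle graph (n ≥ 3) with binomial edge ideal J_{C_n} over ℂ, and let S ∈ min(C_n) with |S| ≥ 3. Then v_{P_S}(J_{C_n}) ≥ n − |S|. -/
open MvPolynomial

variable {n : ℕ}

/-- Number of connected components of the subgraph of `G` induced on `T`. -/
noncomputable def numComp (G : SimpleGraph (Fin n)) (T : Set (Fin n)) : ℕ :=
  Nat.card (G.induce T).ConnectedComponent

/-- `a` and `b` lie in the same connected component of the subgraph induced on `T`. -/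
def SameComp (G : SimpleGraph (Fin n)) (T : Set (Fin n)) (a b : Fin n) : Prop :=
  ∃ (ha : a ∈ T) (hb : b ∈ T), (G.induce T).Reachable ⟨a, ha⟩ ⟨b, hb⟩

/-- `S` is a minimal `k`-cut of `G`. -/
def IsMinKCut (G : SimpleGraph (Fin n)) (S : Set (Fin n)) (k : ℕ) : Prop :=
  S.Nonempty ∧ S ≠ Set.univ ∧ numComp G Sᶜ = k ∧
    ∀ i ∈ S, numComp G (Sᶜ ∪ {i}) < numComp G Sᶜ

/-- The collection `min(G)`: all minimal `k`-cuts (`k ≥ 2`) together with `∅`. -/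
def minSet (G : SimpleGraph (Fin n)) : Set (Set (Fin n)) :=
  {S | S = ∅ ∨ ∃ k, 2 ≤ k ∧ IsMinKCut G S k}

/-- `A` is a connected dominating set of the subgraph of `G` induced on `T`. -/
def ConnDom (G : SimpleGraph (Fin n)) (T A : Set (Fin n)) : Prop :=
  A ⊆ T ∧ (G.induce A).Connected ∧ ∀ v ∈ T, v ∉ A → ∃ a ∈ A, G.Adj v a

/-- The polynomial ring `K[x_1,…,x_n,y_1,…,y_n]` over `ℂ`. -/
abbrev PolyRing (n : ℕ) := MvPolynomial (Fin n ⊕ Fin n) ℂ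

/-- The binomial `f_{i,j} = x_i y_j − x_j y_i`. -/
noncomputable def fij (i j : Fin n) : PolyRing n :=
  X (Sum.inl i) * X (Sum.inr j) - X (Sum.inl j) * X (Sum.inr i)

/-- The binomial edge ideal of a graph. -/
noncomputable def beIdeal (G : SimpleGraph (Fin n)) : Ideal (PolyRing n) :=
  Ideal.span {g | ∃ i j, G.Adj i j ∧ g = fij i j}

/-- Localized v-number of `I` at `p`. -/
noncomputable def vAt (I p : Ideal (PolyRing n)) : ℕ :=
  sInf {d | ∃ f : PolyRing n, f.IsHomogeneous d ∧ Submodule.colon I (Ideal.span {f}) = p}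

/-- v-number of `I`. -/
noncomputable def vNum (I : Ideal (PolyRing n)) : ℕ :=
  sInf {d | ∃ f : PolyRing n, f.IsHomogeneous d ∧ (Submodule.colon I (Ideal.span {f})).IsPrime}

/-- The graph which is the disjoint union of complete graphs on the connected
components of the subgraph of `G` induced on `Sᶜ`. -/
def tildeG (G : SimpleGraph (Fin n)) (S : Set (Fin n)) : SimpleGraph (Fin n) :=
  SimpleGraph.fromRel (fun a b => SameComp G Sᶜ a b)

/-- The minimal prime `P_S` of the binomial edge ideal. -/
noncomputable def primePS (G : SimpleGraph (Fin n)) (S : Set (Fin n)) : Ideal (PolyRing n) :=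
  Ideal.span (({g | ∃ i ∈ S, g = X (Sum.inl i)} ∪ {g | ∃ i ∈ S, g = X (Sum.inr i)} : Set (PolyRing n)))
    ⊔ beIdeal (tildeG G S)

/-- `B` is a dependent set of the rank-≤2 matroid `M(S)`. -/
def depM (G : SimpleGraph (Fin n)) (S : Set (Fin n)) (B : Set (Fin n)) : Prop :=
  (B ∩ S).Nonempty ∨ (∃ a b, a ∈ B ∧ b ∈ B ∧ a ≠ b ∧ SameComp G Sᶜ a b) ∨ 3 ≤ B.ncard

/-- `A` is a transversal of `{D(M(S'))\D(M(S)) : S' ∈ min(G)\{S}}` consisting of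
singletons and pairs outside `D(M(S))`. -/
def IsTransversal (G : SimpleGraph (Fin n)) (S : Set (Fin n))
    (A : Finset (Finset (Fin n))) : Prop :=
  (∀ e ∈ A, e.card = 1 ∨ e.card = 2) ∧ (∀ e ∈ A, ¬ depM G S ↑e) ∧
    ∀ S' ∈ minSet G, S' ≠ S → ∃ e ∈ A, depM G S' ↑e

/-- The singletons of `A`, viewed as a subset of `[n]`. -/
def A1set (A : Finset (Finset (Fin n))) : Finset (Fin n) :=
  (A.filter fun e => e.card = 1).biUnion id

/-- The pairs of `A`. -/
def A2set (A : Finset (Finset (Fin n))) : Finset (Finset (Fin n)) :=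
  A.filter fun e => e.card = 2

/-- The binomial attached to an unordered pair. -/
noncomputable def fPair (e : Finset (Fin n)) : PolyRing n :=
  if h : e.Nonempty then fij (e.min' h) (e.max' h) else 1

/-- The generator `g_{A,C,D}`. -/
noncomputable def gPoly (A : Finset (Finset (Fin n))) (C D : Finset (Fin n)) : PolyRing n :=
  (∏ k ∈ C, X (Sum.inl k)) * (∏ k ∈ D, X (Sum.inr k)) * ∏ e ∈ A2set A, fPair e

/-- The cycle graph on `[n]`. -/
def cycG (n : ℕ) [NeZero n] : SimpleGraph (Fin n) :=
  SimpleGraph.fromRel (fun i j => j = i + 1)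

/-- The connected domination number of `G`. -/
noncomputable def gammaC (G : SimpleGraph (Fin n)) : ℕ :=
  sInf {k | ∃ A : Set (Fin n), ConnDom G Set.univ A ∧ A.ncard = k}

/-- `S'` is nice with respect to the components `V1`, `V2`. -/
def Nice (G : SimpleGraph (Fin n)) (V1 V2 S' : Set (Fin n)) : Prop :=
  ¬ ∃ i j, i ∈ V1 \ S' ∧ j ∈ V2 \ S' ∧ SameComp G S'ᶜ i j

/-- `V1`, `V2` are the vertex sets of the two connected components of the
subgraph induced on `Sᶜ`. -/
def ComponentsOf (G : SimpleGraph (Fin n)) (S V1 V2 : Set (Fin n)) : Prop :=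
  V1 ∪ V2 = Sᶜ ∧ Disjoint V1 V2 ∧ V1.Nonempty ∧ V2.Nonempty ∧
    (∀ a ∈ V1, ∀ b ∈ V1, SameComp G Sᶜ a b) ∧
    (∀ a ∈ V2, ∀ b ∈ V2, SameComp G Sᶜ a b) ∧
    ∀ a ∈ V1, ∀ b ∈ V2, ¬ SameComp G Sᶜ a b

/-- Significance index of a variable: `x_1 > ⋯ > x_n > y_1 > ⋯ > y_n`. -/
def sigIdx (n : ℕ) : Fin n ⊕ Fin n → ℕ := Sum.elim (fun i => (i : ℕ)) (fun i => n + i)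

/-- Lexicographic comparison of exponent vectors. -/
def lexLt (n : ℕ) (a b : (Fin n ⊕ Fin n) →₀ ℕ) : Prop :=
  ∃ v, a v < b v ∧ ∀ w, sigIdx n w < sigIdx n v → a w = b w

/-- `m` is the leading (lex-largest) exponent of `f`. -/
def IsLeadExp (n : ℕ) (f : PolyRing n) (m : (Fin n ⊕ Fin n) →₀ ℕ) : Prop :=
  m ∈ f.support ∧ ∀ m' ∈ f.support, m' ≠ m → lexLt n m' m

/-- The initial ideal of `I` with respect to the lexicographic order. -/
noncomputable def inIdeal (I : Ideal (PolyRing n)) : Ideal (PolyRing n) :=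
  Ideal.span {g | ∃ f ∈ I, ∃ m, IsLeadExp n f m ∧ g = monomial m 1}

/-- A permutation `σ` of `[n]` is `S`-consistent (for `S` an independent set of
the cycle `C_n`). -/
def SConsistent (n : ℕ) [NeZero n] (S : Set (Fin n)) (σ : Equiv.Perm (Fin n)) : Prop :=
  (∀ x : Fin n, x ∉ S → x + 1 ∈ S →
    ((σ x < σ (x + 2) → x + 3 ∉ S → σ (x + 2) < σ (x + 3)) ∧
     (σ x < σ (x + 2) → x - 1 ∉ S → σ (x - 1) < σ x) ∧
     (σ (x + 2) < σ x → x + 3 ∉ S → σ (x + 3) < σ (x + 2)) ∧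
     (σ (x + 2) < σ x → x - 1 ∉ S → σ x < σ (x - 1)))) ∧
  (∀ y : Fin n, y - 1 ∉ S → y ∉ S → y + 1 ∉ S → (σ (y - 1) < σ y ↔ σ y < σ (y + 1)))


/-!
The bound is read off from the parametrization `param G Z` attached to a vertex set `Z`: it sends
`x_w ↦ t_w u_K` and `y_w ↦ t_w v_K`, where `K` is the component of `w` in `G - Z`, and kills the
variables of the vertices of `Z`. It kills `J_G` for every `Z`, and by straightening (rewriting
`x_a y_b` as `x_b y_a` modulo `P_S` when `b < a` lie in one component) its kernel for `Z = S` is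
exactly `P_S`. This gives an explicit homogeneous `f₀` with `J : f₀ = P_S`, so the infimum defining
`v_{P_S}` is over a nonempty set.

Now let `f` be homogeneous of degree `d` with `J : f = P_S`. Then `f ∉ P_S`, so `param S f ≠ 0`.
For every `w ∉ S` the cycle provides a set `Z ∋ w` and some `q ∈ P_S` with `param Z q ≠ 0`; since
`q f ∈ J`, `param Z f = 0`. As `param S` followed by `t_w ↦ 0` factors through `param Z`, every
monomial of `param S f` contains `t_w`. Its `t`-degree is `d`, hence `d ≥ |Sᶜ| = n - |S|`.
-/

namespace SimpleGraph.Walk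

variable {V : Type*} {G : SimpleGraph V} {T : Set V}

/-- Allowing `x` at the start of `q` is what makes the statement inductive. -/
theorem exists_walk_avoiding {x : V} (hx : ∀ u ∈ T, ∀ v ∈ T, G.Adj x u → G.Adj x v → u = v)
    {a b : V} (p : G.Walk a b) (hp : ∀ v ∈ p.support, v ∈ T) (hb : b ≠ x) :
    ∃ q : G.Walk a b, (∀ v ∈ q.support, v ∈ T) ∧ x ∉ q.support.tail := by
  induction p with
  | nil => exact ⟨.nil, hp, by simp⟩
  | @cons a c b h p ih =>
    obtain ⟨q, hqT, hqx⟩ := ih (fun v hv => hp v (by simp [hv])) hb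
    by_cases hc : c = x
    · subst hc
      cases q with
      | nil => exact absurd rfl hb
      | cons h' q =>
        obtain rfl := hx _ (hp _ (by simp)) _ (hqT _ (by simp)) h.symm h'
        refine ⟨q, fun v hv => hqT v (by simp [hv]), fun hmem => hqx ?_⟩
        simpa using List.mem_of_mem_tail hmem
    · refine ⟨.cons h q, ?_, ?_⟩
      · simp only [support_cons, List.mem_cons, forall_eq_or_imp]
        exact ⟨hp _ (by simp), hqT⟩
      · rw [support_cons, List.tail_cons, ← q.cons_tail_support, List.mem_cons, not_or]
        exact ⟨Ne.symm hc, hqx⟩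

theorem exists_mem_support_eq (f : V → ℕ) (hf : ∀ u ∈ T, ∀ v ∈ T, G.Adj u v → f v ≤ f u + 1)
    {a b : V} (p : G.Walk a b) (hp : ∀ v ∈ p.support, v ∈ T) {k : ℕ} (hak : f a ≤ k)
    (hkb : k ≤ f b) : ∃ v ∈ p.support, f v = k := by
  induction p with
  | nil => exact ⟨_, start_mem_support _, by omega⟩
  | @cons a c b h p ih =>
    by_cases hk : f a = k
    · exact ⟨a, by simp, hk⟩
    have hc := hf a (hp a (by simp)) c (hp c (by simp)) h
    obtain ⟨v, hv, rfl⟩ := ih (fun v hv => hp v (by simp [hv])) (by omega) hkb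
    exact ⟨v, by simp [hv], rfl⟩

end SimpleGraph.Walk

theorem Fin.val_add_one_of_two_le [NeZero n] (hn : 2 ≤ n) (a : Fin n) :
    ((a + 1 : Fin n) : ℕ) = if (a : ℕ) + 1 = n then 0 else (a : ℕ) + 1 := by
  rw [Fin.val_add, Fin.val_one', Nat.mod_eq_of_lt (by omega : 1 < n)]
  split_ifs with h
  · rw [h, Nat.mod_self]
  · exact Nat.mod_eq_of_lt (by omega)

theorem MvPolynomial.coeff_aeval_ite_X {σ R : Type*} [CommSemiring R] [DecidableEq σ] (t : σ)
    (p : MvPolynomial σ R) {m : σ →₀ ℕ} (hm : m t = 0) :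
    coeff m (aeval (fun s => if s = t then 0 else X s) p) = coeff m p := by
  induction p using MvPolynomial.induction_on' with
  | add p q hp hq => rw [map_add, coeff_add, coeff_add, hp, hq]
  | monomial m' c =>
    rw [aeval_monomial, Finsupp.prod]
    by_cases ht : m' t = 0
    · rw [Finset.prod_congr rfl fun s hs => by
        rw [if_neg (by rintro rfl; exact Finsupp.mem_support_iff.mp hs ht)],
        ← Finsupp.prod, algebraMap_eq, ← monomial_eq]
    · rw [Finset.prod_eq_zero (Finsupp.mem_support_iff.mpr ht) (by simp [ht]), mul_zero,
        coeff_zero, coeff_monomial, if_neg (by rintro rfl; exact ht hm)]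

section SameComp

open SimpleGraph

variable {G : SimpleGraph (Fin n)} {T T' : Set (Fin n)} {a b c : Fin n}

theorem sameComp_iff_exists_walk :
    SameComp G T a b ↔ ∃ p : G.Walk a b, ∀ v ∈ p.support, v ∈ T := by
  constructor
  · rintro ⟨ha, hb, ⟨p⟩⟩
    let q : G.Walk a b := p.map (Embedding.induce T).toHom
    have hq : q.support = p.support.map (Embedding.induce T).toHom := Walk.support_map _ p
    refine ⟨q, fun v hv => ?_⟩
    rw [hq, List.mem_map] at hv
    obtain ⟨v, -, rfl⟩ := hv
    exact v.2
  · rintro ⟨p, hp⟩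
    exact ⟨_, _, ⟨p.induce T hp⟩⟩

theorem SameComp.refl (ha : a ∈ T) : SameComp G T a a := ⟨ha, ha, .rfl⟩

theorem SameComp.symm (h : SameComp G T a b) : SameComp G T b a :=
  let ⟨ha, hb, hr⟩ := h; ⟨hb, ha, hr.symm⟩

theorem SameComp.trans (h : SameComp G T a b) (h' : SameComp G T b c) : SameComp G T a c :=
  let ⟨ha, _, hr⟩ := h; let ⟨_, hc, hr'⟩ := h'; ⟨ha, hc, hr.trans hr'⟩

theorem SameComp.of_adj (ha : a ∈ T) (hb : b ∈ T) (hab : G.Adj a b) : SameComp G T a b :=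
  ⟨ha, hb, (show (G.induce T).Adj ⟨a, ha⟩ ⟨b, hb⟩ from hab).reachable⟩

theorem SameComp.mono (h : SameComp G T a b) (hT : T ⊆ T') : SameComp G T' a b := by
  obtain ⟨p, hp⟩ := sameComp_iff_exists_walk.mp h
  exact sameComp_iff_exists_walk.mpr ⟨p, fun v hv => hT (hp v hv)⟩

theorem SameComp.diff_singleton {x : Fin n} (h : SameComp G T a b)
    (hx : ∀ u ∈ T, ∀ v ∈ T, G.Adj x u → G.Adj x v → u = v) (ha : a ≠ x) (hb : b ≠ x) :
    SameComp G (T \ {x}) a b := by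
  obtain ⟨p, hp⟩ := sameComp_iff_exists_walk.mp h
  obtain ⟨q, hqT, hqx⟩ := Walk.exists_walk_avoiding hx p hp hb
  refine sameComp_iff_exists_walk.mpr ⟨q, fun v hv => ⟨hqT v hv, ?_⟩⟩
  rw [← q.cons_tail_support, List.mem_cons] at hv
  rintro rfl
  exact hv.elim (fun h => ha h.symm) hqx

end SameComp

namespace BinomialEdge

open SimpleGraph

section Cycle

/-- The position of `v` on the path `i + 1, i + 2, …, i - 1` left by deleting `i` from the
cycle. -/
def pathCoord (i v : Fin n) : ℕ :=
  if (i : ℕ) < v then (v : ℕ) - i - 1 else (v : ℕ) + n - i - 1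

theorem pathCoord_le {i v : Fin n} (hv : v ≠ i) : pathCoord i v ≤ n - 2 := by
  have := Fin.val_ne_of_ne hv
  have := v.isLt
  unfold pathCoord
  split_ifs <;> omega

theorem pathCoord_injective (i : Fin n) : Function.Injective (pathCoord i) := by
  intro v v' h
  have := v.isLt; have := v'.isLt; have := i.isLt
  unfold pathCoord at h
  ext
  split_ifs at h <;> omega

variable [NeZero n]

theorem cycG_adj {a b : Fin n} : (cycG n).Adj a b ↔ a ≠ b ∧ (b = a + 1 ∨ a = b + 1) := by
  simp [cycG, fromRel_adj]

theorem cycG_adj_add_one (hn : 2 ≤ n) (a : Fin n) : (cycG n).Adj a (a + 1) := by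
  refine cycG_adj.mpr ⟨fun h => ?_, .inl rfl⟩
  have := Fin.val_add_one_of_two_le hn a
  rw [← h] at this
  split_ifs at this <;> omega

theorem cycG_adj_sub_one (hn : 2 ≤ n) (a : Fin n) : (cycG n).Adj (a - 1) a := by
  simpa using cycG_adj_add_one hn (a - 1)

theorem cycG_adj_unique {T : Set (Fin n)} {i w : Fin n} (hiw : (cycG n).Adj i w) (hw : w ∉ T) :
    ∀ u ∈ T, ∀ v ∈ T, (cycG n).Adj i u → (cycG n).Adj i v → u = v := by
  have nbr : ∀ {u}, (cycG n).Adj i u → u = i + 1 ∨ u = i - 1 := fun hu => by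
    rcases (cycG_adj.mp hu).2 with h | h
    · exact .inl h
    · exact .inr (eq_sub_of_add_eq h.symm)
  intro u hu v hv hiu hiv
  rcases nbr hiw with rfl | rfl <;> rcases nbr hiu with rfl | rfl <;>
    rcases nbr hiv with rfl | rfl <;> first | rfl | contradiction

theorem pathCoord_add_one_self (hn : 2 ≤ n) (i : Fin n) : pathCoord i (i + 1) = 0 := by
  have := Fin.val_add_one_of_two_le hn i
  unfold pathCoord
  split_ifs at * <;> omega

theorem pathCoord_sub_one_self (hn : 2 ≤ n) (i : Fin n) : pathCoord i (i - 1) = n - 2 := by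
  have := Fin.val_add_one_of_two_le hn (i - 1)
  rw [sub_add_cancel] at this
  have := (i - 1).isLt
  unfold pathCoord
  split_ifs at * <;> omega

theorem pathCoord_le_add_one (hn : 2 ≤ n) {i u v : Fin n} (hu : u ≠ i) (hv : v ≠ i)
    (huv : (cycG n).Adj u v) : pathCoord i v ≤ pathCoord i u + 1 := by
  have := Fin.val_ne_of_ne hu; have := Fin.val_ne_of_ne hv
  have := u.isLt; have := v.isLt
  rcases (cycG_adj.mp huv).2 with rfl | rfl
  · have := Fin.val_add_one_of_two_le hn u
    unfold pathCoord
    split_ifs at * <;> omega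
  · have := Fin.val_add_one_of_two_le hn v
    unfold pathCoord
    split_ifs at * <;> omega

theorem sub_one_ne_add_one (hn : 3 ≤ n) (i : Fin n) : i - 1 ≠ i + 1 := fun h => by
  have := pathCoord_sub_one_self (by omega) i
  rw [h, pathCoord_add_one_self (by omega)] at this
  omega

/-- A walk from `i + 1` to `i - 1` avoiding `i` moves `pathCoord i` by steps of at most one, so
it passes through `s`. -/
theorem not_sameComp_sub_one_add_one (hn : 3 ≤ n) {Z : Set (Fin n)} {i s : Fin n} (hi : i ∈ Z)
    (hs : s ∈ Z) (hsi : s ≠ i) : ¬ SameComp (cycG n) Zᶜ (i - 1) (i + 1) := by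
  intro h
  obtain ⟨p, hp⟩ := sameComp_iff_exists_walk.mp (SameComp.symm h)
  have hne : ∀ {v}, v ∈ Zᶜ → v ≠ i := fun hv h => hv (h ▸ hi)
  obtain ⟨v, hv, hvs⟩ := Walk.exists_mem_support_eq (pathCoord i)
    (fun u hu v hv => pathCoord_le_add_one (by omega) (hne hu) (hne hv)) p hp
    (k := pathCoord i s) (by rw [pathCoord_add_one_self (by omega)]; exact Nat.zero_le _)
    (by rw [pathCoord_sub_one_self (by omega)]; exact pathCoord_le hsi)
  exact hp v hv (pathCoord_injective i hvs ▸ hs)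

/-- If `i, i + 1 ∈ S`, putting `i` back does not merge any components. -/
theorem add_one_notMem_of_mem_minSet (hn : 3 ≤ n) {S : Set (Fin n)}
    (hS : S ∈ minSet (cycG n)) (hne : S.Nonempty) {i : Fin n} (hi : i ∈ S) : i + 1 ∉ S := by
  intro hi1
  obtain ⟨k, -, -, -, -, hmin⟩ := hS.resolve_left hne.ne_empty
  refine (hmin i hi).not_ge (Nat.card_le_card_of_injective
    (ConnectedComponent.map ((cycG n).induceHomOfLE Set.subset_union_left).toHom) ?_)
  refine ConnectedComponent.ind₂ fun u v huv => ConnectedComponent.sound ?_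
  have hi1' : i + 1 ∉ Sᶜ ∪ {i} := by
    rintro (h | h)
    · exact h hi1
    · exact (cycG_adj_add_one (by omega) i).ne h.symm
  have hne : ∀ v : ↥Sᶜ, (v : Fin n) ≠ i := fun v h => v.2 (h ▸ hi)
  have hsub : (Sᶜ ∪ {i}) \ {i} ⊆ Sᶜ := fun x ⟨hx, hxi⟩ => hx.resolve_right hxi
  obtain ⟨_, _, h⟩ := SameComp.mono (SameComp.diff_singleton ⟨_, _, ConnectedComponent.exact huv⟩
    (cycG_adj_unique (cycG_adj_add_one (by omega) i) hi1') (hne u) (hne v)) hsub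
  exact h

end Cycle

section Param

/-- Variables `t_v` for the vertices and `u_K`, `v_K` for the vertex sets `K`. -/
abbrev TargetRing (n : ℕ) := MvPolynomial (Fin n ⊕ (Set (Fin n) ⊕ Set (Fin n))) ℂ

def vtx : Fin n ⊕ Fin n → Fin n := Sum.elim id id

@[simp] theorem vtx_inl (w : Fin n) : vtx (.inl w : Fin n ⊕ Fin n) = w := rfl

@[simp] theorem vtx_inr (w : Fin n) : vtx (.inr w : Fin n ⊕ Fin n) = w := rfl

variable (G : SimpleGraph (Fin n)) (Z : Set (Fin n))

/-- Empty when `w ∈ Z`. -/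
def compOf (w : Fin n) : Set (Fin n) := {v | SameComp G Zᶜ w v}

noncomputable def paramExp (s : Fin n ⊕ Fin n) : Fin n ⊕ (Set (Fin n) ⊕ Set (Fin n)) →₀ ℕ :=
  .single (.inl (vtx s)) 1 + .single (.inr (s.map (compOf G Z) (compOf G Z))) 1

open Classical in
noncomputable def param : PolyRing n →ₐ[ℂ] TargetRing n :=
  aeval fun s => if vtx s ∈ Z then 0 else monomial (paramExp G Z s) 1

/-- The exponent of `param G Z (monomial m 1)` when `m` avoids `Z`. -/
noncomputable def paramExpSum (m : (Fin n ⊕ Fin n) →₀ ℕ) :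
    Fin n ⊕ (Set (Fin n) ⊕ Set (Fin n)) →₀ ℕ :=
  ∑ s, m s • paramExp G Z s

variable {G Z}

theorem param_X_of_mem {s : Fin n ⊕ Fin n} (hs : vtx s ∈ Z) : param G Z (X s) = 0 := by
  simp [param, hs]

theorem param_X_of_notMem {s : Fin n ⊕ Fin n} (hs : vtx s ∉ Z) :
    param G Z (X s) = monomial (paramExp G Z s) 1 := by
  simp [param, hs]

theorem param_X_ne_zero {s : Fin n ⊕ Fin n} (hs : vtx s ∉ Z) : param G Z (X s) ≠ 0 := by
  rw [param_X_of_notMem hs]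
  exact monomial_eq_zero.not.mpr one_ne_zero

theorem param_X_inl {w : Fin n} (hw : w ∉ Z) :
    param G Z (X (.inl w)) = X (.inl w) * X (.inr (.inl (compOf G Z w))) := by
  rw [param_X_of_notMem hw, paramExp, ← mul_one (1 : ℂ), ← monomial_mul]
  rfl

theorem param_X_inr {w : Fin n} (hw : w ∉ Z) :
    param G Z (X (.inr w)) = X (.inl w) * X (.inr (.inr (compOf G Z w))) := by
  rw [param_X_of_notMem hw, paramExp, ← mul_one (1 : ℂ), ← monomial_mul]
  rfl

theorem param_monomial {m : (Fin n ⊕ Fin n) →₀ ℕ} (hm : ∀ s, vtx s ∈ Z → m s = 0) (c : ℂ) :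
    param G Z (monomial m c) = monomial (paramExpSum G Z m) c := by
  classical
  have hfactor : ∀ s ∈ m.support, (if vtx s ∈ Z then 0 else monomial (paramExp G Z s) 1) ^ m s =
      monomial (m s • paramExp G Z s) (1 : ℂ) := fun s hs => by
    rw [if_neg fun h => Finsupp.mem_support_iff.mp hs (hm s h), monomial_pow, one_pow]
  rw [param, aeval_monomial, Finsupp.prod, Finset.prod_congr rfl hfactor, ← monomial_sum_one,
    algebraMap_eq, C_mul_monomial, mul_one, paramExpSum]
  congr 2
  exact Finset.sum_subset (Finset.subset_univ _) fun s _ hs => by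
    simp [Finsupp.notMem_support_iff.mp hs]

theorem paramExpSum_inl (m : (Fin n ⊕ Fin n) →₀ ℕ) (w : Fin n) :
    paramExpSum G Z m (.inl w) = m (.inl w) + m (.inr w) := by
  classical
  simp [paramExpSum, paramExp, Finsupp.single_apply, vtx, Fintype.sum_sum_type]

theorem paramExpSum_inr_inl (m : (Fin n ⊕ Fin n) →₀ ℕ) (K : Set (Fin n)) :
    paramExpSum G Z m (.inr (.inl K)) = ∑ w, if compOf G Z w = K then m (.inl w) else 0 := by
  classical
  simp [paramExpSum, paramExp, Finsupp.single_apply, vtx, Fintype.sum_sum_type]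

theorem compOf_eq_iff {a b : Fin n} (hb : b ∉ Z) :
    compOf G Z a = compOf G Z b ↔ SameComp G Zᶜ a b := by
  refine ⟨fun h => ?_, fun h => Set.ext fun v => ⟨h.symm.trans, h.trans⟩⟩
  have hb' : b ∈ compOf G Z b := SameComp.refl hb
  rwa [← h] at hb'

theorem param_fij {a b : Fin n} (ha : a ∉ Z) (hb : b ∉ Z) :
    param G Z (fij a b) = X (.inl a) * X (.inl b) *
      (X (.inr (.inl (compOf G Z a))) * X (.inr (.inr (compOf G Z b))) -
        X (.inr (.inl (compOf G Z b))) * X (.inr (.inr (compOf G Z a)))) := by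
  simp only [fij, map_sub, map_mul, param_X_inl ha, param_X_inr ha, param_X_inl hb,
    param_X_inr hb]
  ring

theorem param_fij_of_mem {a b : Fin n} (h : a ∈ Z ∨ b ∈ Z) : param G Z (fij a b) = 0 := by
  rcases h with h | h <;>
    simp [fij, param_X_of_mem (s := .inl _) h, param_X_of_mem (s := .inr _) h]

theorem param_fij_eq_zero {a b : Fin n} (h : SameComp G Zᶜ a b) : param G Z (fij a b) = 0 := by
  have ⟨ha, hb, _⟩ := h
  rw [param_fij ha hb, (compOf_eq_iff hb).mpr h, sub_self, mul_zero]

theorem param_fij_ne_zero {a b : Fin n} (ha : a ∉ Z) (hb : b ∉ Z) (h : ¬ SameComp G Zᶜ a b) :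
    param G Z (fij a b) ≠ 0 := by
  classical
  rw [← compOf_eq_iff hb] at h
  rw [param_fij ha hb]
  refine mul_ne_zero (mul_ne_zero (X_ne_zero _) (X_ne_zero _)) fun h0 => ?_
  -- evaluate at `u_{K_a} = v_{K_b} = 1` and all other variables `0`
  have := congrArg (eval fun t => if t = .inr (.inl (compOf G Z a)) ∨
    t = .inr (.inr (compOf G Z b)) then (1 : ℂ) else 0) h0
  simp [Ne.symm h] at this

theorem beIdeal_le_ker_param : beIdeal G ≤ RingHom.ker (param G Z) := by
  refine Ideal.span_le.mpr ?_
  rintro _ ⟨a, b, hab, rfl⟩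
  by_cases h : a ∈ Z ∨ b ∈ Z
  · exact param_fij_of_mem h
  · rw [not_or] at h
    exact param_fij_eq_zero (SameComp.of_adj h.1 h.2 hab)

theorem param_eq_zero_of_mul_mem {f q : PolyRing n} (hq : q * f ∈ beIdeal G)
    (hq0 : param G Z q ≠ 0) : param G Z f = 0 :=
  (mul_eq_zero.mp (map_mul (param G Z) q f ▸ beIdeal_le_ker_param hq)).resolve_left hq0

theorem primePS_le_ker_param : primePS G Z ≤ RingHom.ker (param G Z) := by
  refine sup_le (Ideal.span_le.mpr ?_) (Ideal.span_le.mpr ?_)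
  · rintro _ (⟨i, hi, rfl⟩ | ⟨i, hi, rfl⟩)
    · exact param_X_of_mem (s := .inl i) hi
    · exact param_X_of_mem (s := .inr i) hi
  · rintro _ ⟨a, b, hab, rfl⟩
    rcases ((fromRel_adj _ _ _).mp hab).2 with h | h
    · exact param_fij_eq_zero h
    · exact param_fij_eq_zero h.symm

end Param

section Straightening

variable {G : SimpleGraph (Fin n)} {S : Set (Fin n)}

theorem X_mem_primePS {s : Fin n ⊕ Fin n} (hs : vtx s ∈ S) : X s ∈ primePS G S := by
  refine Ideal.mem_sup_left (Ideal.subset_span ?_)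
  cases s with
  | inl i => exact .inl ⟨i, hs, rfl⟩
  | inr i => exact .inr ⟨i, hs, rfl⟩

theorem fij_mem_primePS {a b : Fin n} (hab : a ≠ b) (h : SameComp G Sᶜ a b) :
    fij a b ∈ primePS G S :=
  Ideal.mem_sup_right (Ideal.subset_span ⟨a, b, (fromRel_adj _ _ _).mpr ⟨hab, .inl h⟩, rfl⟩)

variable (G S) in
def IsStandard (m : (Fin n ⊕ Fin n) →₀ ℕ) : Prop :=
  (∀ s, vtx s ∈ S → m s = 0) ∧
    ∀ a b, SameComp G Sᶜ a b → b < a → m (.inl a) = 0 ∨ m (.inr b) = 0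

/-- The measure decreased by the straightening step `x_a y_b ↦ x_b y_a`, `b < a`. -/
noncomputable def xWeight : ((Fin n ⊕ Fin n) →₀ ℕ) →+ ℕ :=
  Finsupp.weight (Sum.elim (fun a : Fin n => (a : ℕ)) 0)

theorem monomial_mem_primePS_sup_standard (m : (Fin n ⊕ Fin n) →₀ ℕ) :
    monomial m 1 ∈
      (primePS G S).restrictScalars ℂ ⊔ restrictSupport ℂ {m | IsStandard G S m} := by
  induction h : xWeight m using Nat.strong_induction_on generalizing m with
  | _ N ih =>
  subst h
  by_cases hS : ∃ s, vtx s ∈ S ∧ m s ≠ 0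
  · obtain ⟨s, hs, hms⟩ := hS
    exact Submodule.mem_sup_left
      (Ideal.mem_of_dvd _ (X_dvd_monomial.mpr (.inr hms)) (X_mem_primePS hs))
  by_cases hstd : IsStandard G S m
  · exact Submodule.mem_sup_right ((monomial_mem_restrictSupport ℂ).mpr (.inl hstd))
  obtain ⟨a, b, hab, hba, ha, hb⟩ :
      ∃ a b, SameComp G Sᶜ a b ∧ b < a ∧ m (.inl a) ≠ 0 ∧ m (.inr b) ≠ 0 := by
    by_contra! hc
    exact hstd ⟨fun s hs => by_contra fun hms => hS ⟨s, hs, hms⟩,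
      fun a b hab hba => or_iff_not_imp_left.mpr (hc a b hab hba)⟩
  obtain ⟨m, rfl⟩ := exists_add_of_le (Finsupp.single_le_iff.mpr (Nat.one_le_iff_ne_zero.mpr ha))
  obtain ⟨m, rfl⟩ := exists_add_of_le (Finsupp.single_le_iff.mpr (Nat.one_le_iff_ne_zero.mpr
    (by simpa using hb)))
  have hstep : (monomial (.single (.inl a) 1 + (.single (.inr b) 1 + m)) 1 : PolyRing n) =
      monomial m 1 * fij a b + monomial (.single (.inl b) 1 + (.single (.inr a) 1 + m)) 1 := by
    simp only [monomial_single_add, pow_one, fij]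
    ring
  rw [hstep]
  refine add_mem (Submodule.mem_sup_left (Ideal.mul_mem_left _ _ (fij_mem_primePS hba.ne' hab)))
    (ih _ ?_ _ rfl)
  simpa [xWeight, Finsupp.weight_single] using hba

theorem primePS_sup_standard_eq_top :
    (primePS G S).restrictScalars ℂ ⊔ restrictSupport ℂ {m | IsStandard G S m} = ⊤ := by
  refine Submodule.eq_top_iff'.mpr fun f => ?_
  induction f using MvPolynomial.induction_on' with
  | monomial m c =>
    rw [← mul_one c, ← smul_eq_mul, ← smul_monomial]
    exact Submodule.smul_mem _ c (monomial_mem_primePS_sup_standard m)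
  | add p q hp hq => exact add_mem hp hq

/-- The surplus of `m₂` at `w₀` in the exponent of `u_K`, `K` the component of `w₀`, is balanced
by some `x_{w₁}` of `m₁` with `w₀ < w₁`; so `m₁` has no `y_{w₀}`, contradicting the exponent
of `t_{w₀}`. -/
theorem not_lt_of_paramExpSum_eq {m₁ m₂ : (Fin n ⊕ Fin n) →₀ ℕ} (h₁ : IsStandard G S m₁)
    (h₂ : IsStandard G S m₂) (h : paramExpSum G S m₁ = paramExpSum G S m₂) {w₀ : Fin n}
    (hbelow : ∀ w < w₀, m₁ (.inl w) = m₂ (.inl w)) : ¬ m₁ (.inl w₀) < m₂ (.inl w₀) := by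
  intro hlt
  have hw₀ : w₀ ∉ S := fun hS => by simp [h₂.1 (.inl w₀) hS] at hlt
  have hu := congrArg (· (.inr (.inl (compOf G S w₀)))) h
  simp only [paramExpSum_inr_inl] at hu
  obtain ⟨w₁, hw₀₁, hK, hlt₁⟩ : ∃ w₁, w₀ < w₁ ∧ compOf G S w₁ = compOf G S w₀ ∧
      m₂ (.inl w₁) < m₁ (.inl w₁) := by
    by_contra! hc
    refine hu.not_lt (Finset.sum_lt_sum (fun w _ => ?_) ⟨w₀, Finset.mem_univ _, by simpa⟩)
    split_ifs with hw
    · rcases lt_trichotomy w w₀ with hww | rfl | hww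
      · exact (hbelow w hww).le
      · exact hlt.le
      · exact hc w hww hw
    · rfl
  rcases h₁.2 w₁ w₀ ((compOf_eq_iff hw₀).mp hK) hw₀₁ with h0 | h0
  · omega
  · have ht := congrArg (· (.inl w₀)) h
    simp only [paramExpSum_inl] at ht
    omega

theorem eq_of_paramExpSum_eq {m₁ m₂ : (Fin n ⊕ Fin n) →₀ ℕ} (h₁ : IsStandard G S m₁)
    (h₂ : IsStandard G S m₂) (h : paramExpSum G S m₁ = paramExpSum G S m₂) : m₁ = m₂ := by
  have hx : ∀ w, m₁ (.inl w) = m₂ (.inl w) := by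
    intro w
    induction w using WellFoundedLT.induction with
    | _ w ih =>
    have := not_lt_of_paramExpSum_eq h₁ h₂ h ih
    have := not_lt_of_paramExpSum_eq h₂ h₁ h.symm fun v hv => (ih v hv).symm
    omega
  ext (w | w)
  · exact hx w
  · have ht := congrArg (· (.inl w)) h
    simp only [paramExpSum_inl] at ht
    have := hx w
    omega

theorem eq_zero_of_param_eq_zero {f : PolyRing n}
    (hf : f ∈ restrictSupport ℂ {m | IsStandard G S m}) (h0 : param G S f = 0) : f = 0 := by
  classical
  rw [mem_restrictSupport_iff] at hf
  by_contra hne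
  obtain ⟨m₀, hm₀⟩ := support_nonempty.mpr hne
  have hsum : param G S f = ∑ m ∈ f.support, monomial (paramExpSum G S m) (coeff m f) := by
    conv_lhs => rw [f.as_sum]
    rw [map_sum]
    exact Finset.sum_congr rfl fun m hm => param_monomial (hf hm).1 _
  have hcoeff := congrArg (coeff (paramExpSum G S m₀)) hsum
  rw [h0, coeff_zero, coeff_sum, Finset.sum_eq_single m₀ (fun m hm hne => ?_) (absurd hm₀),
    coeff_monomial, if_pos rfl] at hcoeff
  · exact mem_support_iff.mp hm₀ hcoeff.symm
  · rw [coeff_monomial, if_neg fun h => hne (eq_of_paramExpSum_eq (hf hm) (hf hm₀) h)]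

theorem ker_param_le_primePS : RingHom.ker (param G S) ≤ primePS G S := by
  intro f hf
  obtain ⟨p, hp, q, hq, rfl⟩ := Submodule.mem_sup.mp
    (primePS_sup_standard_eq_top (G := G) (S := S) ▸ Submodule.mem_top (x := f))
  have hq0 : param G S q = 0 := by
    rw [RingHom.mem_ker, map_add, primePS_le_ker_param hp, zero_add] at hf
    exact hf
  rw [eq_zero_of_param_eq_zero hq hq0, add_zero]
  exact hp

end Straightening

section Witness

variable {S : Set (Fin n)}

open Classical in
noncomputable def xProd (S : Set (Fin n)) : PolyRing n :=
  ∏ w ∈ Finset.univ.filter (· ∉ S), X (.inl w)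

/-- Along a walk `a = v₀, v₁, …, vₗ = b` of `G - S`, the identity
`x_{v₁} f_{a b} = x_a f_{v₁ b} + x_b f_{a v₁}` peels off one edge at a time. -/
theorem fij_mul_xProd_pow_mem {G : SimpleGraph (Fin n)} {a b : Fin n} (p : G.Walk a b)
    (hp : ∀ v ∈ p.support, v ∉ S) : fij a b * xProd S ^ p.length ∈ beIdeal G := by
  classical
  induction p with
  | nil => simp [fij]
  | @cons a c b h p ih =>
    have hc : c ∈ Finset.univ.filter (· ∉ S) := by simpa using hp c (by simp)
    obtain ⟨Q, hQ⟩ : X (.inl c) ∣ xProd S := by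
      unfold xProd
      exact Finset.dvd_prod_of_mem _ hc
    have hedge : fij a c ∈ beIdeal G := Ideal.subset_span ⟨a, c, h, rfl⟩
    have hrest := ih fun v hv => hp v (by simp [hv])
    have : fij a b * xProd S ^ (p.cons h).length =
        X (.inl a) * Q * (fij c b * xProd S ^ p.length) +
          X (.inl b) * Q * xProd S ^ p.length * fij a c := by
      rw [Walk.length_cons, pow_succ, hQ]
      simp only [fij]
      ring
    rw [this]
    exact add_mem (Ideal.mul_mem_left _ _ hrest) (Ideal.mul_mem_left _ _ hedge)

variable [NeZero n]

open Classical in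
noncomputable def colonWitness (S : Set (Fin n)) : PolyRing n :=
  xProd S ^ n * ∏ i ∈ Finset.univ.filter (· ∈ S), fij (i - 1) (i + 1)

theorem colonWitness_isHomogeneous : ∃ d, (colonWitness S).IsHomogeneous d := by
  have hfij : ∀ i j : Fin n, (fij i j).IsHomogeneous 2 := fun i j =>
    ((isHomogeneous_X _ _).mul (isHomogeneous_X _ _)).sub
      ((isHomogeneous_X _ _).mul (isHomogeneous_X _ _))
  unfold colonWitness
  exact ⟨_, ((IsHomogeneous.prod _ _ _ fun _ _ => isHomogeneous_X _ _).pow n).mul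
    (IsHomogeneous.prod _ _ _ fun i _ => hfij _ _)⟩

theorem fij_dvd_colonWitness {i : Fin n} (hi : i ∈ S) :
    fij (i - 1) (i + 1) ∣ colonWitness S := by
  classical
  exact dvd_mul_of_dvd_right (Finset.dvd_prod_of_mem _ (by simpa using hi)) _

theorem mul_colonWitness_mem_of_sameComp {a b : Fin n} (h : SameComp (cycG n) Sᶜ a b) :
    fij a b * colonWitness S ∈ beIdeal (cycG n) := by
  obtain ⟨p, hp⟩ := sameComp_iff_exists_walk.mp h
  have hlen : p.bypass.length ≤ n := by
    simpa using (p.bypass_isPath.length_lt).le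
  refine Ideal.mem_of_dvd _ ?_
    (fij_mul_xProd_pow_mem p.bypass fun v hv => hp v (p.support_bypass_subset_support hv))
  exact mul_dvd_mul_left _ (dvd_mul_of_dvd_left (pow_dvd_pow (xProd S) hlen) _)

theorem X_mul_colonWitness_mem (hn : 3 ≤ n) {i : Fin n} (hi : i ∈ S) :
    X (.inl i) * colonWitness S ∈ beIdeal (cycG n) ∧
      X (.inr i) * colonWitness S ∈ beIdeal (cycG n) := by
  have e₁ : fij i (i + 1) ∈ beIdeal (cycG n) :=
    Ideal.subset_span ⟨_, _, cycG_adj_add_one (by omega) i, rfl⟩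
  have e₂ : fij (i - 1) i ∈ beIdeal (cycG n) :=
    Ideal.subset_span ⟨_, _, cycG_adj_sub_one (by omega) i, rfl⟩
  constructor <;> refine Ideal.mem_of_dvd _ (mul_dvd_mul_left _ (fij_dvd_colonWitness hi)) ?_
  · have : X (.inl i) * fij (i - 1) (i + 1) =
        X (.inl (i - 1)) * fij i (i + 1) + X (.inl (i + 1)) * fij (i - 1) i := by
      simp only [fij]; ring
    rw [this]
    exact add_mem (Ideal.mul_mem_left _ _ e₁) (Ideal.mul_mem_left _ _ e₂)
  · have : X (.inr i) * fij (i - 1) (i + 1) =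
        X (.inr (i - 1)) * fij i (i + 1) + X (.inr (i + 1)) * fij (i - 1) i := by
      simp only [fij]; ring
    rw [this]
    exact add_mem (Ideal.mul_mem_left _ _ e₁) (Ideal.mul_mem_left _ _ e₂)

theorem primePS_le_colon_colonWitness (hn : 3 ≤ n) :
    primePS (cycG n) S ≤ (beIdeal (cycG n)).colon (Ideal.span {colonWitness S}) := by
  refine sup_le (Ideal.span_le.mpr ?_) (Ideal.span_le.mpr ?_)
  · rintro _ (⟨i, hi, rfl⟩ | ⟨i, hi, rfl⟩)
    · exact Ideal.mem_colon_span_singleton.mpr (X_mul_colonWitness_mem hn hi).1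
    · exact Ideal.mem_colon_span_singleton.mpr (X_mul_colonWitness_mem hn hi).2
  · rintro _ ⟨a, b, hab, rfl⟩
    refine Ideal.mem_colon_span_singleton.mpr ?_
    rcases ((fromRel_adj _ _ _).mp hab).2 with h | h
    · exact mul_colonWitness_mem_of_sameComp h
    · have : fij a b = -fij b a := by simp only [fij]; ring
      rw [this, neg_mul]
      exact neg_mem (mul_colonWitness_mem_of_sameComp h)

theorem param_colonWitness_ne_zero (hn : 3 ≤ n) (hind : ∀ i ∈ S, i + 1 ∉ S)
    (hS : 1 < S.ncard) : param (cycG n) S (colonWitness S) ≠ 0 := by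
  classical
  rw [colonWitness, map_mul, map_pow, xProd, map_prod, map_prod]
  refine mul_ne_zero (pow_ne_zero _ (Finset.prod_ne_zero_iff.mpr fun w hw => ?_))
    (Finset.prod_ne_zero_iff.mpr fun i hi => ?_)
  · exact param_X_ne_zero (s := .inl w) (by simpa using hw)
  · replace hi : i ∈ S := by simpa using hi
    obtain ⟨s, hs, hsi⟩ := Set.exists_ne_of_one_lt_ncard hS i
    have hpred : i - 1 ∉ S := fun h => hind _ h (by simpa using hi)
    exact param_fij_ne_zero hpred (hind i hi) (not_sameComp_sub_one_add_one hn hi hs hsi)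

theorem colon_colonWitness (hn : 3 ≤ n) (hind : ∀ i ∈ S, i + 1 ∉ S) (hS : 1 < S.ncard) :
    (beIdeal (cycG n)).colon (Ideal.span {colonWitness S}) = primePS (cycG n) S := by
  refine le_antisymm (fun r hr => ker_param_le_primePS ?_) (primePS_le_colon_colonWitness hn)
  have h := beIdeal_le_ker_param (Z := S) (Ideal.mem_colon_span_singleton.mp hr)
  rw [RingHom.mem_ker, map_mul] at h
  exact (mul_eq_zero.mp h).resolve_right (param_colonWitness_ne_zero hn hind hS)

end Witness

section Transport

open Classical in
noncomputable def killVertex (w : Fin n) : TargetRing n →ₐ[ℂ] TargetRing n :=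
  aeval fun τ => if τ = .inl w then 0 else X τ

variable {G : SimpleGraph (Fin n)} {S Z : Set (Fin n)} {w : Fin n}

variable (G S) in
def saturate (K : Set (Fin n)) : Set (Fin n) := {x | ∃ u ∈ K, u ∉ S ∧ SameComp G Sᶜ u x}

theorem saturate_compOf (hcomp : ∀ a b, a ∉ S → b ∉ S → SameComp G Zᶜ a b → SameComp G Sᶜ a b)
    {v : Fin n} (hvZ : v ∉ Z) (hvS : v ∉ S) : saturate G S (compOf G Z v) = compOf G S v :=
  Set.ext fun _ => ⟨fun ⟨u, hvu, hu, hux⟩ => SameComp.trans (hcomp v u hvS hu hvu) hux,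
    fun hvx => ⟨v, SameComp.refl hvZ, hvS, hvx⟩⟩

theorem exists_killVertex_comp_param_eq (hw : w ∈ Z) (hZ : Z ⊆ insert w S)
    (hcomp : ∀ a b, a ∉ S → b ∉ S → SameComp G Zᶜ a b → SameComp G Sᶜ a b) :
    ∃ F : TargetRing n →ₐ[ℂ] TargetRing n,
      (killVertex w).comp (param G S) = F.comp (param G Z) := by
  classical
  refine ⟨aeval (Sum.elim (fun j => if j ∈ S then 0 else X (.inl j))
    (fun c => X (.inr (c.map (saturate G S) (saturate G S))))), algHom_ext fun s => ?_⟩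
  simp only [AlgHom.comp_apply]
  by_cases hS : vtx s ∈ S
  · rw [param_X_of_mem hS, map_zero]
    by_cases hZs : vtx s ∈ Z
    · rw [param_X_of_mem hZs, map_zero]
    · cases s <;> simp_all [param_X_inl, param_X_inr]
  by_cases hsw : vtx s = w
  · rw [param_X_of_mem (hsw ▸ hw : vtx s ∈ Z), map_zero]
    cases s <;> simp_all [param_X_inl, param_X_inr, killVertex]
  have hZs : vtx s ∉ Z := fun h => (hZ h).elim hsw hS
  cases s <;> simp_all [param_X_inl, param_X_inr, killVertex, saturate_compOf hcomp]

theorem killVertex_param_eq_zero_of_param_eq_zero (hw : w ∈ Z) (hZ : Z ⊆ insert w S)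
    (hcomp : ∀ a b, a ∉ S → b ∉ S → SameComp G Zᶜ a b → SameComp G Sᶜ a b) {f : PolyRing n}
    (hf : param G Z f = 0) : killVertex w (param G S f) = 0 := by
  obtain ⟨F, hF⟩ := exists_killVertex_comp_param_eq hw hZ hcomp
  rw [← AlgHom.comp_apply, hF, AlgHom.comp_apply, hf, map_zero]

theorem ncard_compl_le_of_killVertex {f : PolyRing n} {d : ℕ} (hf : f.IsHomogeneous d)
    (hne : param G S f ≠ 0) (hkill : ∀ w ∉ S, killVertex w (param G S f) = 0) :
    Sᶜ.ncard ≤ d := by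
  classical
  obtain ⟨τ, hτ⟩ := support_nonempty.mpr hne
  obtain ⟨m, hm, hτm⟩ : ∃ m ∈ f.support, τ ∈ (param G S (monomial m (coeff m f))).support := by
    rw [f.as_sum, map_sum] at hτ
    simpa using support_sum hτ
  have hmS : ∀ s, vtx s ∈ S → m s = 0 := fun s hs => by
    by_contra h
    obtain ⟨q, hq⟩ := X_dvd_monomial.mpr (.inr h : coeff m f = 0 ∨ m s ≠ 0)
    simp [hq, param_X_of_mem hs] at hτm
  rw [param_monomial hmS, support_monomial, if_neg (mem_support_iff.mp hm),
    Finset.mem_singleton] at hτm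
  subst hτm
  -- a monomial without `t_w` would survive `t_w ↦ 0`
  have hpos : ∀ w ∉ S, 1 ≤ paramExpSum G S m (.inl w) := fun w hw => by
    by_contra! h0
    have := coeff_aeval_ite_X (.inl w) (param G S f) (m := paramExpSum G S m) (by omega)
    rw [← killVertex, hkill w hw, coeff_zero] at this
    exact mem_support_iff.mp hτ this.symm
  calc Sᶜ.ncard = ∑ w ∈ Sᶜ.toFinset, 1 := by simp [Set.ncard_eq_toFinset_card']
    _ ≤ ∑ w ∈ Sᶜ.toFinset, paramExpSum G S m (.inl w) :=
      Finset.sum_le_sum fun w hw => hpos w (by simpa using hw)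
    _ ≤ ∑ w, paramExpSum G S m (.inl w) := Finset.sum_le_sum_of_subset (Finset.subset_univ _)
    _ = ∑ s, m s := by simp [paramExpSum_inl, Fintype.sum_sum_type, Finset.sum_add_distrib]
    _ = d := by
      rw [hf.degree_eq_sum_deg_support hm, ← Finsupp.degree_apply, Finsupp.degree_eq_sum]

variable [NeZero n]

/-- If `w` has a neighbour `i ∈ S`, delete `w` and put `i` back, so that `x_i ∈ P_S` survives;
otherwise delete `w` as well, so that `f_{w-1,w+1} ∈ P_S` survives. -/
theorem killVertex_param_eq_zero (hn : 3 ≤ n) (hSne : S.Nonempty) {f : PolyRing n}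
    (hfP : primePS (cycG n) S ≤ (beIdeal (cycG n)).colon (Ideal.span {f})) (hw : w ∉ S) :
    killVertex w (param (cycG n) S f) = 0 := by
  have hmul : ∀ q ∈ primePS (cycG n) S, q * f ∈ beIdeal (cycG n) := fun q hq =>
    Ideal.mem_colon_span_singleton.mp (hfP hq)
  by_cases hnbr : ∃ i ∈ S, (cycG n).Adj i w
  · obtain ⟨i, hi, hiw⟩ := hnbr
    have hiZ : i ∉ insert w (S \ {i}) := by simp [hiw.ne]
    refine killVertex_param_eq_zero_of_param_eq_zero (Set.mem_insert w _)
      (Set.insert_subset_insert Set.sdiff_subset) (fun a b ha hb hab => ?_)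
      (param_eq_zero_of_mul_mem (hmul _ (X_mem_primePS (s := .inl i) hi))
        (param_X_ne_zero (s := .inl i) hiZ))
    refine SameComp.mono (SameComp.diff_singleton hab (cycG_adj_unique hiw (by simp))
      (fun h => ha (h ▸ hi)) (fun h => hb (h ▸ hi))) fun x ⟨hx, hxi⟩ hxS => ?_
    exact hx (.inr ⟨hxS, hxi⟩)
  · push Not at hnbr
    obtain ⟨s, hs⟩ := hSne
    have hpred := cycG_adj_sub_one (by omega) w
    have hsucc := cycG_adj_add_one (by omega) w
    have hq : fij (w - 1) (w + 1) ∈ primePS (cycG n) S :=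
      fij_mem_primePS (sub_one_ne_add_one hn w)
        (SameComp.trans (SameComp.of_adj (hnbr _ · hpred) hw hpred)
          (SameComp.of_adj hw (hnbr _ · hsucc.symm) hsucc))
    refine killVertex_param_eq_zero_of_param_eq_zero (Set.mem_insert w S) subset_rfl
      (fun a b _ _ hab => SameComp.mono hab (Set.compl_subset_compl.mpr (Set.subset_insert w S)))
      (param_eq_zero_of_mul_mem (hmul _ hq) (param_fij_ne_zero ?_ ?_
        (not_sameComp_sub_one_add_one hn (Set.mem_insert w S) (Set.mem_insert_of_mem w hs)
          fun h => hw (h ▸ hs))))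
    · simpa [hpred.ne] using (hnbr _ · hpred)
    · simpa [hsucc.ne'] using (hnbr _ · hsucc.symm)

end Transport

end BinomialEdge

/-- lower bound `v_{P_S}(J_{C_n}) ≥ n − |S|` for `|S| ≥ 3`. -/
theorem stmt15 {n : ℕ} [NeZero n] (hn : 3 ≤ n) (S : Set (Fin n))
    (hS : S ∈ minSet (cycG n)) (hcard : 3 ≤ S.ncard) :
    n - S.ncard ≤ vAt (beIdeal (cycG n)) (primePS (cycG n) S) := by
  open BinomialEdge in
  have hSne : S.Nonempty := Set.nonempty_of_ncard_ne_zero (by omega)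
  have hind : ∀ i ∈ S, i + 1 ∉ S := fun i => add_one_notMem_of_mem_minSet hn hS hSne
  have hcolon := colon_colonWitness hn hind (by omega)
  obtain ⟨d₀, hd₀⟩ := colonWitness_isHomogeneous (S := S)
  refine le_csInf ⟨d₀, _, hd₀, hcolon⟩ ?_
  rintro d ⟨f, hf, hfcolon⟩
  have hfS : param (cycG n) S f ≠ 0 := fun h0 => by
    have hf₀ : colonWitness S * f ∈ beIdeal (cycG n) := mul_comm f _ ▸
      Ideal.mem_colon_span_singleton.mp (hcolon.ge (ker_param_le_primePS h0))
    rw [← Ideal.mem_colon_span_singleton, hfcolon] at hf₀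
    exact param_colonWitness_ne_zero hn hind (by omega) (primePS_le_ker_param hf₀)
  have hd := ncard_compl_le_of_killVertex hf hfS fun w hw =>
    killVertex_param_eq_zero hn hSne hfcolon.ge hw
  have htot := Set.ncard_add_ncard_compl S
  rw [Nat.card_eq_fintype_card, Fintype.card_fin] at htot
  omega
end

section
/- Let G be a connected graph on [n] and S a minimal cut with components V_1, V_2 of G restricted to [n]\S. A collection A of singletons and pairs from [n], all disjoint from the dependent sets of M(S), is a transversal of {D(M(S'))\D(M(S)) : S' ∈ min(G)\{S}} if and only if (i) the support of A (union of its elements) intersected with V_i is a connected dominating set of the induced subgraph G_{V_i ∪ S} for each i = 1, 2, and (ii) A contains at least one pair, i.e., some {i,j} with i ∈ V_1 and j ∈ V_2. -/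
open MvPolynomial

variable {n : ℕ}

namespace StmtAux


def Closed (G : SimpleGraph (Fin n)) (S E : Set (Fin n)) : Prop :=
  ∀ a ∈ E, ∀ b, G.Adj a b → b ∈ E ∪ S

variable {G : SimpleGraph (Fin n)} {T T' E S D F : Set (Fin n)} {a b c s i j : Fin n}

lemma sc_symm (h : SameComp G T a b) : SameComp G T b a := by
  obtain ⟨ha, hb, h⟩ := h; exact ⟨hb, ha, h.symm⟩

lemma sc_trans (h : SameComp G T a b) (h' : SameComp G T b c) : SameComp G T a c := by
  obtain ⟨ha, hb, h⟩ := h; obtain ⟨_, hc, h'⟩ := h'; exact ⟨ha, hc, h.trans h'⟩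

lemma sc_adj (ha : a ∈ T) (hb : b ∈ T) (h : G.Adj a b) : SameComp G T a b :=
  ⟨ha, hb, SimpleGraph.Adj.reachable (by simpa using h)⟩

lemma sc_mono (hTT : T ⊆ T') (h : SameComp G T a b) : SameComp G T' a b := by
  obtain ⟨ha, hb, h⟩ := h
  exact ⟨hTT ha, hTT hb, h.map (G.induceHomOfLE hTT).toHom⟩

lemma walk_closed (hcl : ∀ x ∈ E, ∀ y ∈ T, G.Adj x y → y ∈ E) {x y : ↥T}
    (hr : (G.induce T).Reachable x y) (hx : ↑x ∈ E) : ↑y ∈ E := by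
  obtain ⟨p⟩ := hr
  induction p with
  | nil => exact hx
  | cons h p ih => exact ih (hcl _ hx _ (by exact Subtype.coe_prop _) h)

lemma closed_mem (hcl : Closed G S E) (ha : a ∈ E) (h : SameComp G Sᶜ a b) : b ∈ E := by
  obtain ⟨ha', hb', hr⟩ := h
  refine walk_closed (fun x hx y hy hxy => ?_) hr ha
  rcases hcl x hx y hxy with h | h
  · exact h
  · exact absurd h hy

lemma sc_univ (hG : G.Connected) (a b : Fin n) : SameComp G Set.univ a b := by
  refine ⟨trivial, trivial, ?_⟩
  have h := hG.preconnected a b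
  have := h.map (G.induceUnivIso.symm.toHom)
  convert this using 2 <;> exact Subtype.ext rfl

lemma reach_insert {x y : ↥(T ∪ {s})}
    (hr : (G.induce (T ∪ {s})).Reachable x y) (hy : ↑y ∈ T) :
    ((x : Fin n) = s ∧ ∃ w2 ∈ T, G.Adj s w2 ∧ SameComp G T w2 ↑y) ∨
    ((x : Fin n) ∈ T ∧ (SameComp G T ↑x ↑y ∨ ∃ w1 ∈ T, ∃ w2 ∈ T,
      G.Adj s w1 ∧ G.Adj s w2 ∧ SameComp G T ↑x w1 ∧ SameComp G T w2 ↑y)) := by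
  obtain ⟨p⟩ := hr
  induction p with
  | nil =>
    exact Or.inr ⟨hy, Or.inl ⟨hy, hy, SimpleGraph.Reachable.refl _⟩⟩
  | @cons u v w h p ih =>
    have hadj : G.Adj ↑u ↑v := h
    rcases ih hy with ⟨hv, w2, hw2, hadj2, hsc⟩ | ⟨hv, hrest⟩
    · have hadj' : G.Adj ↑u s := by rwa [hv] at hadj
      have hu : (u : Fin n) ∈ T := by
        rcases u.2 with h' | h'
        · exact h'
        · rw [Set.mem_singleton_iff] at h'
          rw [h'] at hadj'; exact absurd hadj' (G.irrefl)
      exact Or.inr ⟨hu, Or.inr ⟨↑u, hu, w2, hw2, hadj'.symm, hadj2,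
        ⟨hu, hu, .refl _⟩, hsc⟩⟩
    · rcases u.2 with hu | hu
      · have huv : SameComp G T ↑u ↑v := ⟨hu, hv, SimpleGraph.Adj.reachable (by simpa using hadj)⟩
        refine Or.inr ⟨hu, ?_⟩
        rcases hrest with h' | ⟨w1, hw1, w2, hw2, h1, h2, h3, h4⟩
        · exact Or.inl (sc_trans huv h')
        · exact Or.inr ⟨w1, hw1, w2, hw2, h1, h2, sc_trans huv h3, h4⟩
      · rw [Set.mem_singleton_iff] at hu
        have hadj' : G.Adj s ↑v := by rwa [hu] at hadj
        rcases hrest with h' | ⟨w1, hw1, w2, hw2, h1, h2, h3, h4⟩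
        · exact Or.inl ⟨hu, ↑v, hv, hadj', h'⟩
        · exact Or.inl ⟨hu, w2, hw2, h2, h4⟩

noncomputable def ccmap (G : SimpleGraph (Fin n)) (T : Set (Fin n)) (s : Fin n) :
    (G.induce T).ConnectedComponent → (G.induce (T ∪ {s})).ConnectedComponent :=
  SimpleGraph.ConnectedComponent.map (G.induceHomOfLE Set.subset_union_left).toHom

lemma ccmap_mk (u : ↥T) :
    ccmap G T s ((G.induce T).connectedComponentMk u) =
      (G.induce (T ∪ {s})).connectedComponentMk ⟨↑u, Or.inl u.2⟩ := rfl

lemma sc_of_reach_sub {u v : ↥T} (h : (G.induce T).Reachable u v) : SameComp G T ↑u ↑v :=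
  ⟨u.2, v.2, by convert h <;> exact Subtype.ext rfl⟩

lemma reach_of_sc {u v : ↥T} (h : SameComp G T ↑u ↑v) : (G.induce T).Reachable u v := by
  obtain ⟨ha, hb, h⟩ := h
  convert h <;> exact (Subtype.ext rfl)

lemma card_le_insert (hs : s ∉ T)
    (hpair : ∀ w1 ∈ T, G.Adj s w1 → ∀ w2 ∈ T, G.Adj s w2 → SameComp G T w1 w2) :
    numComp G T ≤ numComp G (T ∪ {s}) := by
  have hinj : Function.Injective (ccmap G T s) := by
    intro c1 c2 hcc
    induction c1 using SimpleGraph.ConnectedComponent.ind with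
    | _ u =>
      induction c2 using SimpleGraph.ConnectedComponent.ind with
      | _ v =>
        rw [ccmap_mk, ccmap_mk, SimpleGraph.ConnectedComponent.eq] at hcc
        rw [SimpleGraph.ConnectedComponent.eq]
        rcases reach_insert hcc (by exact v.2) with ⟨hus, -⟩ | ⟨-, hsc | ⟨w1, hw1, w2, hw2, h1, h2, h3, h4⟩⟩
        · exact absurd (hus ▸ u.2 : s ∈ T) hs
        · exact reach_of_sc hsc
        · exact reach_of_sc (sc_trans h3 (sc_trans (hpair w1 hw1 h1 w2 hw2 h2) h4))
  exact Nat.card_le_card_of_injective _ hinj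

lemma card_lt_insert (hs : s ∉ T) {w1 w2 : Fin n} (hw1 : w1 ∈ T) (hw2 : w2 ∈ T)
    (ha1 : G.Adj s w1) (ha2 : G.Adj s w2) (hne : ¬ SameComp G T w1 w2) :
    numComp G (T ∪ {s}) < numComp G T := by
  have hsurj : Function.Surjective (ccmap G T s) := by
    intro c
    induction c using SimpleGraph.ConnectedComponent.ind with
    | _ z =>
      rcases z.2 with hz | hz
      · exact ⟨(G.induce T).connectedComponentMk ⟨↑z, hz⟩, by rw [ccmap_mk]⟩
      · refine ⟨(G.induce T).connectedComponentMk ⟨w1, hw1⟩, ?_⟩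
        rw [ccmap_mk, SimpleGraph.ConnectedComponent.eq]
        refine SimpleGraph.Adj.reachable ?_
        show G.Adj w1 ↑z
        rw [Set.mem_singleton_iff] at hz
        rw [hz]; exact ha1.symm
  have hnotinj : ¬ Function.Injective (ccmap G T s) := by
    intro hinj
    apply hne
    have h1 : ccmap G T s ((G.induce T).connectedComponentMk ⟨w1, hw1⟩) =
        ccmap G T s ((G.induce T).connectedComponentMk ⟨w2, hw2⟩) := by
      rw [ccmap_mk, ccmap_mk, SimpleGraph.ConnectedComponent.eq]
      have r1 : (G.induce (T ∪ {s})).Reachable ⟨w1, Or.inl hw1⟩ ⟨s, Or.inr rfl⟩ :=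
        SimpleGraph.Adj.reachable (by exact ha1.symm)
      have r2 : (G.induce (T ∪ {s})).Reachable ⟨s, Or.inr rfl⟩ ⟨w2, Or.inl hw2⟩ :=
        SimpleGraph.Adj.reachable (by exact ha2)
      exact r1.trans r2
    have := hinj h1
    rw [SimpleGraph.ConnectedComponent.eq] at this
    exact sc_of_reach_sub this
  have f1 : Fintype ((G.induce T).ConnectedComponent) := Fintype.ofFinite _
  have f2 : Fintype ((G.induce (T ∪ {s})).ConnectedComponent) := Fintype.ofFinite _
  unfold numComp
  rw [Nat.card_eq_fintype_card, Nat.card_eq_fintype_card]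
  exact Fintype.card_lt_of_surjective_not_injective _ hsurj hnotinj

lemma two_le_numComp (ha : a ∈ T) (hb : b ∈ T) (h : ¬ SameComp G T a b) :
    2 ≤ numComp G T := by
  rw [numComp, Nat.succ_le_iff, Finite.one_lt_card_iff_nontrivial]
  refine ⟨(G.induce T).connectedComponentMk ⟨a, ha⟩,
    (G.induce T).connectedComponentMk ⟨b, hb⟩, fun hc => ?_⟩
  rw [SimpleGraph.ConnectedComponent.eq] at hc
  exact h (sc_of_reach_sub hc)

lemma exists_two_comps (hs : s ∈ S) (hlt : numComp G (Sᶜ ∪ {s}) < numComp G Sᶜ) :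
    ∃ w1 ∈ Sᶜ, ∃ w2 ∈ Sᶜ, G.Adj s w1 ∧ G.Adj s w2 ∧ ¬ SameComp G Sᶜ w1 w2 := by
  by_contra hno
  push_neg at hno
  have := card_le_insert (T := Sᶜ) (s := s) (by simpa using hs)
    (fun w1 hw1 h1 w2 hw2 h2 => hno w1 hw1 w2 hw2 h1 h2)
  omega

lemma greedy (G : SimpleGraph (Fin n)) (hG : G.Connected) (i j : Fin n) (F : Set (Fin n)) :
    ∀ (N : ℕ) (S₀ D E : Set (Fin n)), S₀.ncard ≤ N →
    Closed G S₀ D → Closed G S₀ E →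
    Disjoint D S₀ → Disjoint E S₀ → Disjoint D E →
    Disjoint F (D ∪ E ∪ S₀) →
    j ∈ D → i ∈ E ∪ F →
    ∃ S' D' E', S' ⊆ S₀ ∧ D ⊆ D' ∧ E ⊆ E' ∧ D' ⊆ D ∪ S₀ ∧ E' ⊆ E ∪ S₀ ∧
      Closed G S' D' ∧ Closed G S' E' ∧ Disjoint D' S' ∧ Disjoint E' S' ∧ Disjoint D' E' ∧
      Disjoint F (D' ∪ E' ∪ S') ∧ j ∈ D' ∧
      IsMinKCut G S' (numComp G S'ᶜ) ∧ 2 ≤ numComp G S'ᶜ := by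
  intro N
  induction N with
  | zero =>
    intro S₀ D E hcard hD hE hDS hES hDE hF hj hi
    -- S₀ = ∅ hence minimality trivially holds, but we will derive a contradiction
    have hS₀ : S₀ = ∅ := by
      have : S₀.Finite := Set.toFinite _
      rw [← Set.ncard_eq_zero this] ; omega
    exfalso
    subst hS₀
    have hsc : SameComp G (∅ : Set (Fin n))ᶜ j i := by
      rw [Set.compl_empty]; exact sc_univ hG j i
    have : i ∈ D := closed_mem hD hj hsc
    rcases hi with hi | hi
    · exact hDE.ne_of_mem this hi rfl
    · exact hF.ne_of_mem hi (Or.inl (Or.inl this)) rfl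
  | succ N ih =>
    intro S₀ D E hcard hD hE hDS hES hDE hF hj hi
    have hiD : i ∉ D := by
      rcases hi with hi | hi
      · exact fun h => hDE.ne_of_mem h hi rfl
      · exact fun h => hF.ne_of_mem hi (Or.inl (Or.inl h)) rfl
    by_cases hmin : ∀ s ∈ S₀, numComp G (S₀ᶜ ∪ {s}) < numComp G S₀ᶜ
    · -- S₀ is already a minimal cut
      have hjS : j ∉ S₀ := fun h => hDS.ne_of_mem hj h rfl
      have hiS : i ∉ S₀ := by
        rcases hi with hi | hi
        · exact fun h => hES.ne_of_mem hi h rfl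
        · exact fun h => hF.ne_of_mem hi (Or.inr h) rfl
      have hnsc : ¬ SameComp G S₀ᶜ j i := fun h => hiD (closed_mem hD hj h)
      have hne : S₀.Nonempty := by
        rcases Set.eq_empty_or_nonempty S₀ with rfl | h
        · exfalso; exact hnsc (by rw [Set.compl_empty]; exact sc_univ hG j i)
        · exact h
      have h2 : 2 ≤ numComp G S₀ᶜ := two_le_numComp hjS hiS hnsc
      exact ⟨S₀, D, E, subset_rfl, subset_rfl, subset_rfl, Set.subset_union_left,
        Set.subset_union_left, hD, hE, hDS, hES, hDE, hF, hj,
        ⟨hne, fun h => hjS (h ▸ Set.mem_univ j), rfl, hmin⟩, h2⟩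
    · push_neg at hmin
      obtain ⟨s, hsS, hsbig⟩ := hmin
      have hsT : s ∉ S₀ᶜ := by simpa using hsS
      have hpair : ∀ w1 ∈ S₀ᶜ, G.Adj s w1 → ∀ w2 ∈ S₀ᶜ, G.Adj s w2 → SameComp G S₀ᶜ w1 w2 := by
        intro w1 hw1 ha1 w2 hw2 ha2
        by_contra hno
        exact absurd (card_lt_insert hsT hw1 hw2 ha1 ha2 hno) (not_lt.mpr hsbig)
      set S₁ := S₀ \ {s} with hS₁
      have hcard₁ : S₁.ncard ≤ N := by
        have h := Set.ncard_diff_singleton_lt_of_mem hsS (Set.toFinite _)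
        rw [← hS₁] at h
        omega
      have hsub₁ : S₁ ⊆ S₀ := Set.diff_subset
      have hDT : D ⊆ S₀ᶜ := fun x hx => fun hxS => hDS.ne_of_mem hx hxS rfl
      have hET : E ⊆ S₀ᶜ := fun x hx => fun hxS => hES.ne_of_mem hx hxS rfl
      by_cases hc1 : ∃ d ∈ D, G.Adj s d
      · obtain ⟨d, hdD, hsd⟩ := hc1
        have hD₁ : Closed G S₁ (insert s D) := by
          intro a ha b hab
          rcases ha with rfl | ha
          · by_cases hbS : b ∈ S₀
            · have : b ≠ a := fun h => G.irrefl (h ▸ hab)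
              exact Or.inr ⟨hbS, fun h => this (h : b = a)⟩
            · have hbT : b ∈ S₀ᶜ := hbS
              have := hpair b hbT hab d (hDT hdD) hsd
              exact Or.inl (Or.inr (closed_mem hD hdD (sc_symm this)))
          · rcases hD a ha b hab with h | h
            · exact Or.inl (Or.inr h)
            · by_cases hbs : b = s
              · exact Or.inl (Or.inl hbs)
              · exact Or.inr ⟨h, hbs⟩
        have hE₁ : Closed G S₁ E := by
          intro a ha b hab
          rcases hE a ha b hab with h | h
          · exact Or.inl h
          · by_cases hbs : b = s
            · exfalso
              subst hbs
              have := closed_mem hE ha (hpair a (hET ha) hab.symm d (hDT hdD) hsd)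
              exact hDE.ne_of_mem hdD this rfl
            · exact Or.inr ⟨h, hbs⟩
        obtain ⟨S', D', E', h1, h2, h3, h4, h5, rest⟩ :=
          ih S₁ (insert s D) E hcard₁ hD₁ hE₁
            (by
              rw [Set.disjoint_left]
              rintro x (rfl | hx) hxS
              · exact hxS.2 rfl
              · exact hDS.ne_of_mem hx (hsub₁ hxS) rfl)
            (hES.mono_right hsub₁) 
            (by
              rw [Set.disjoint_left]
              rintro x (rfl | hx) hxE
              · exact hES.ne_of_mem hxE hsS rfl
              · exact hDE.ne_of_mem hx hxE rfl)
            (by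
              refine hF.mono_right ?_
              rintro x (((rfl | hx) | hx) | hx)
              · exact Or.inr hsS
              · exact Or.inl (Or.inl hx)
              · exact Or.inl (Or.inr hx)
              · exact Or.inr (hsub₁ hx))
            (Or.inr hj) hi
        exact ⟨S', D', E', h1.trans hsub₁, (Set.subset_insert _ _).trans h2, h3,
          h4.trans (by
            rintro x (hx | hx)
            · rcases hx with rfl | hx
              · exact Or.inr hsS
              · exact Or.inl hx
            · exact Or.inr (hsub₁ hx)),
          h5.trans (Set.union_subset_union_right _ hsub₁), rest⟩
      · by_cases hc2 : ∃ e ∈ E, G.Adj s e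
        · obtain ⟨d, hdD, hsd⟩ := hc2
          have hE₁ : Closed G S₁ (insert s E) := by
            intro a ha b hab
            rcases ha with rfl | ha
            · by_cases hbS : b ∈ S₀
              · have : b ≠ a := fun h => G.irrefl (h ▸ hab)
                exact Or.inr ⟨hbS, fun h => this (h : b = a)⟩
              · have hbT : b ∈ S₀ᶜ := hbS
                have := hpair b hbT hab d (hET hdD) hsd
                exact Or.inl (Or.inr (closed_mem hE hdD (sc_symm this)))
            · rcases hE a ha b hab with h | h
              · exact Or.inl (Or.inr h)
              · by_cases hbs : b = s
                · exact Or.inl (Or.inl hbs)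
                · exact Or.inr ⟨h, hbs⟩
          have hD₁ : Closed G S₁ D := by
            intro a ha b hab
            rcases hD a ha b hab with h | h
            · exact Or.inl h
            · by_cases hbs : b = s
              · exfalso; subst hbs; exact hc1 ⟨a, ha, hab.symm⟩
              · exact Or.inr ⟨h, hbs⟩
          obtain ⟨S', D', E', h1, h2, h3, h4, h5, rest⟩ :=
            ih S₁ D (insert s E) hcard₁ hD₁ hE₁
              (hDS.mono_right hsub₁)
              (by
                rw [Set.disjoint_left]
                rintro x (rfl | hx) hxS
                · exact hxS.2 rfl
                · exact hES.ne_of_mem hx (hsub₁ hxS) rfl)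
              (by
                rw [Set.disjoint_right]
                rintro x (rfl | hx) hxD
                · exact hDS.ne_of_mem hxD hsS rfl
                · exact hDE.ne_of_mem hxD hx rfl)
              (by
                refine hF.mono_right ?_
                rintro x ((hx | (rfl | hx)) | hx)
                · exact Or.inl (Or.inl hx)
                · exact Or.inr hsS
                · exact Or.inl (Or.inr hx)
                · exact Or.inr (hsub₁ hx))
              hj (by
                rcases hi with hi | hi
                · exact Or.inl (Set.mem_insert_iff.mpr (Or.inr hi))
                · exact Or.inr hi)
          exact ⟨S', D', E', h1.trans hsub₁, h2, (Set.subset_insert _ _).trans h3,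
            h4.trans (Set.union_subset_union_right _ hsub₁),
            h5.trans (by
              rintro x (hx | hx)
              · rcases hx with rfl | hx
                · exact Or.inr hsS
                · exact Or.inl hx
              · exact Or.inr (hsub₁ hx)), rest⟩
        · -- neither D nor E adjacent to s
          have hD₁ : Closed G S₁ D := by
            intro a ha b hab
            rcases hD a ha b hab with h | h
            · exact Or.inl h
            · by_cases hbs : b = s
              · exfalso; subst hbs; exact hc1 ⟨a, ha, hab.symm⟩
              · exact Or.inr ⟨h, hbs⟩
          have hE₁ : Closed G S₁ E := by
            intro a ha b hab
            rcases hE a ha b hab with h | h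
            · exact Or.inl h
            · by_cases hbs : b = s
              · exfalso; subst hbs; exact hc2 ⟨a, ha, hab.symm⟩
              · exact Or.inr ⟨h, hbs⟩
          obtain ⟨S', D', E', h1, h2, h3, h4, h5, rest⟩ :=
            ih S₁ D E hcard₁ hD₁ hE₁ (hDS.mono_right hsub₁) (hES.mono_right hsub₁) hDE
              (hF.mono_right (by
                rintro x ((hx | hx) | hx)
                · exact Or.inl (Or.inl hx)
                · exact Or.inl (Or.inr hx)
                · exact Or.inr (hsub₁ hx)))
              hj hi
          exact ⟨S', D', E', h1.trans hsub₁, h2, h3,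
            h4.trans (Set.union_subset_union_right _ hsub₁),
            h5.trans (Set.union_subset_union_right _ hsub₁), rest⟩



/-- one side of the hard direction -/
lemma connDom_side (G : SimpleGraph (Fin n)) (hG : G.Connected)
    (S V1 V2 : Set (Fin n)) (hcomp : ComponentsOf G S V1 V2)
    (A : Finset (Finset (Fin n)))
    (hsize : ∀ e ∈ A, e.card = 1 ∨ e.card = 2)
    (hout : ∀ e ∈ A, ¬ depM G S ↑e)
    (hLHS : ∀ S' ∈ minSet G, S' ≠ S → ∃ e ∈ A, depM G S' ↑e)
    (i j : Fin n) (hiV1 : i ∈ V1) (hjV2 : j ∈ V2)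
    (hijA : ({i, j} : Finset (Fin n)) ∈ A) :
    ConnDom G (V1 ∪ S) ((⋃ e ∈ A, (e : Set (Fin n))) ∩ V1) := by
  obtain ⟨hUV, hdisj, hV1ne, hV2ne, hV1sc, hV2sc, hV12⟩ := hcomp
  set W : Set (Fin n) := ⋃ e ∈ A, (e : Set (Fin n)) with hWdef
  have hmemW : ∀ x : Fin n, x ∈ W ↔ ∃ e ∈ A, x ∈ e := by
    intro x; simp [hWdef]
  have hV1T : V1 ⊆ Sᶜ := fun x hx => by rw [← hUV]; exact Or.inl hx
  have hV2T : V2 ⊆ Sᶜ := fun x hx => by rw [← hUV]; exact Or.inr hx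
  have hpart : ∀ x : Fin n, x ∈ S ∨ x ∈ V1 ∨ x ∈ V2 := by
    intro x
    by_cases h : x ∈ S
    · exact Or.inl h
    · right; have hx : x ∈ Sᶜ := h; rw [← hUV] at hx; exact hx
  have hnoedge : ∀ a ∈ V1, ∀ b ∈ V2, ¬ G.Adj a b := fun a ha b hb h =>
    hV12 a ha b hb (sc_adj (hV1T ha) (hV2T hb) h)
  have hWS : ∀ x ∈ W, x ∉ S := by
    intro x hx hxS
    obtain ⟨e, he, hxe⟩ := (hmemW x).1 hx
    exact hout e he (Or.inl ⟨x, Finset.mem_coe.2 hxe, hxS⟩)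
  have hpairA : ∀ e ∈ A, ∀ a ∈ e, ∀ b ∈ e, a ≠ b →
      (a ∈ V1 ∧ b ∈ V2) ∨ (a ∈ V2 ∧ b ∈ V1) := by
    intro e he a ha b hb hne
    have haW : a ∈ W := (hmemW a).2 ⟨e, he, ha⟩
    have hbW : b ∈ W := (hmemW b).2 ⟨e, he, hb⟩
    have hnsc : ¬ SameComp G Sᶜ a b := fun h =>
      hout e he (Or.inr (Or.inl ⟨a, b, Finset.mem_coe.2 ha, Finset.mem_coe.2 hb, hne, h⟩))
    rcases hpart a with h1 | h1 | h1
    · exact absurd h1 (hWS a haW)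
    · rcases hpart b with h2 | h2 | h2
      · exact absurd h2 (hWS b hbW)
      · exact absurd (hV1sc a h1 b h2) hnsc
      · exact Or.inl ⟨h1, h2⟩
    · rcases hpart b with h2 | h2 | h2
      · exact absurd h2 (hWS b hbW)
      · exact Or.inr ⟨h1, h2⟩
      · exact absurd (hV2sc a h1 b h2) hnsc
  have hiW1 : i ∈ W ∩ V1 := ⟨(hmemW i).2 ⟨_, hijA, by simp⟩, hiV1⟩
  have hjW2 : j ∈ W ∩ V2 := ⟨(hmemW j).2 ⟨_, hijA, by simp⟩, hjV2⟩
  -- the generic refutation of dependence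
  have refute : ∀ S' D' : Set (Fin n), Closed G S' D' → Disjoint D' S' → (W ∩ V2 ⊆ D') →
      (∀ x ∈ W ∩ V1, x ∉ D' ∧ x ∉ S') → ∀ e ∈ A, ¬ depM G S' ↑e := by
    intro S' D' hcl hdisj' hWV2 hWV1 e he hdep
    rcases hdep with ⟨x, hxe, hxS'⟩ | ⟨a, b, ha, hb, hne, hsc⟩ | h3
    · have hxW : x ∈ W := (hmemW x).2 ⟨e, he, hxe⟩
      rcases hpart x with hx | hx | hx
      · exact hWS x hxW hx
      · exact (hWV1 x ⟨hxW, hx⟩).2 hxS'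
      · exact hdisj'.ne_of_mem (hWV2 ⟨hxW, hx⟩) hxS' rfl
    · rw [Finset.mem_coe] at ha hb
      have haW : a ∈ W := (hmemW a).2 ⟨e, he, ha⟩
      have hbW : b ∈ W := (hmemW b).2 ⟨e, he, hb⟩
      rcases hpairA e he a ha b hb hne with ⟨haV1, hbV2⟩ | ⟨haV2, hbV1⟩
      · have hbD : b ∈ D' := hWV2 ⟨hbW, hbV2⟩
        exact (hWV1 a ⟨haW, haV1⟩).1 (closed_mem hcl hbD (sc_symm hsc))
      · have haD : a ∈ D' := hWV2 ⟨haW, haV2⟩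
        exact (hWV1 b ⟨hbW, hbV1⟩).1 (closed_mem hcl haD hsc)
    · rw [Set.ncard_coe_finset] at h3
      rcases hsize e he with h | h <;> omega
  -- domination
  have hdom : ∀ v ∈ V1 ∪ S, v ∉ W ∩ V1 → ∃ a ∈ W ∩ V1, G.Adj v a := by
    intro v hv hvW
    by_contra hnod
    push_neg at hnod
    rcases hv with hvV1 | hvS
    · -- v ∈ V1 undominated
      obtain ⟨S', D', E', hS'sub, hDsub, hEsub, hD'sub, hE'sub, hclD, hclE, hDS', hES', hDE',
          hFdis, hjD', hmin, h2⟩ :=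
        greedy G hG i j (W ∩ V1) _ (S ∪ {x | x ∈ V1 ∧ G.Adj v x}) V2 {v} le_rfl
          (by
            intro a ha b hab
            rcases hpart b with hb | hb | hb
            · exact Or.inr (Or.inl hb)
            · exact absurd hab.symm (fun h => hnoedge b hb a ha h)
            · exact Or.inl hb)
          (by
            intro a ha b hab
            rw [Set.mem_singleton_iff] at ha; subst ha
            rcases hpart b with hb | hb | hb
            · exact Or.inr (Or.inl hb)
            · exact Or.inr (Or.inr ⟨hb, hab⟩)
            · exact absurd hab (hnoedge a hvV1 b hb))
          (by
            rw [Set.disjoint_left]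
            rintro x hx (hxS | hxV1)
            · exact (hV2T hx) hxS
            · exact hdisj.ne_of_mem hxV1.1 hx rfl)
          (by
            rw [Set.disjoint_left]
            rintro x hx (hxS | hxV1)
            · rw [Set.mem_singleton_iff] at hx; subst hx; exact (hV1T hvV1) hxS
            · rw [Set.mem_singleton_iff] at hx; subst hx; exact G.irrefl hxV1.2)
          (by
            rw [Set.disjoint_right]
            rintro x hx hxV2
            rw [Set.mem_singleton_iff] at hx; subst hx
            exact hdisj.ne_of_mem hvV1 hxV2 rfl)
          (by
            rw [Set.disjoint_left]
            rintro x hx (hxDE | hxS)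
            · rcases hxDE with hxV2 | hxv
              · exact hdisj.ne_of_mem hx.2 hxV2 rfl
              · rw [Set.mem_singleton_iff] at hxv; subst hxv; exact hvW hx
            · rcases hxS with hxS | hxV1
              · exact hWS x hx.1 hxS
              · exact hnod x hx hxV1.2)
          hjV2 (Or.inr hiW1)
      have hFS₀ : ∀ x ∈ W ∩ V1, x ∉ V2 ∪ (S ∪ {y | y ∈ V1 ∧ G.Adj v y}) := by
        rintro x hx (hxV2 | hxS | hxV1)
        · exact hdisj.ne_of_mem hx.2 hxV2 rfl
        · exact hWS x hx.1 hxS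
        · exact hnod x hx hxV1.2
      have hnodep := refute S' D' hclD hDS'
        (fun x hx => hDsub hx.2)
        (by
          intro x hx
          refine ⟨fun hxD => hFS₀ x hx (hD'sub hxD), fun hxS' => hFS₀ x hx (Or.inr (hS'sub hxS'))⟩)
      have hS'neS : S' ≠ S := by
        intro hEq
        have hvE' : v ∈ E' := hEsub rfl
        have hiE' : i ∈ E' := by
          refine closed_mem hclE hvE' ?_
          rw [hEq]
          exact hV1sc v hvV1 i hiV1
        exact hFdis.ne_of_mem hiW1 (Or.inl (Or.inr hiE')) rfl
      obtain ⟨e, he, hdep⟩ := hLHS S' (Or.inr ⟨_, h2, hmin⟩) hS'neS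
      exact hnodep e he hdep
    · -- v ∈ S undominated
      obtain ⟨S', D', E', hS'sub, hDsub, hEsub, hD'sub, hE'sub, hclD, hclE, hDS', hES', hDE',
          hFdis, hjD', hmin, h2⟩ :=
        greedy G hG i j (W ∩ V1) _ ((S \ {v}) ∪ {x | x ∈ V1 ∧ G.Adj v x}) (V2 ∪ {v}) ∅ le_rfl
          (by
            rintro a (haV2 | hav) b hab
            · rcases hpart b with hb | hb | hb
              · by_cases hbv : b = v
                · exact Or.inl (Or.inr hbv)
                · exact Or.inr (Or.inl ⟨hb, hbv⟩)
              · exact absurd hab.symm (fun h => hnoedge b hb a haV2 h)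
              · exact Or.inl (Or.inl hb)
            · rw [Set.mem_singleton_iff] at hav; subst hav
              rcases hpart b with hb | hb | hb
              · have hbv : b ≠ a := fun h => G.irrefl (h ▸ hab)
                exact Or.inr (Or.inl ⟨hb, hbv⟩)
              · exact Or.inr (Or.inr ⟨hb, hab⟩)
              · exact Or.inl (Or.inl hb))
          (by rintro a ha; exact absurd ha (Set.notMem_empty a))
          (by
            rw [Set.disjoint_left]
            rintro x (hxV2 | hxv) (hxS | hxV1)
            · exact (hV2T hxV2) hxS.1
            · exact hdisj.ne_of_mem hxV1.1 hxV2 rfl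
            · rw [Set.mem_singleton_iff] at hxv; subst hxv; exact hxS.2 rfl
            · rw [Set.mem_singleton_iff] at hxv; subst hxv; exact (hV1T hxV1.1) hvS)
          (Set.empty_disjoint _)
          (by rw [Set.disjoint_right]; rintro x hx; exact absurd hx (Set.notMem_empty x))
          (by
            rw [Set.disjoint_left]
            rintro x hx (((hxV2 | hxv) | hxe) | hxS)
            · exact hdisj.ne_of_mem hx.2 hxV2 rfl
            · rw [Set.mem_singleton_iff] at hxv; subst hxv; exact hWS x hx.1 hvS
            · exact absurd hxe (Set.notMem_empty x)
            · rcases hxS with hxS | hxV1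
              · exact hWS x hx.1 hxS.1
              · exact hnod x hx hxV1.2)
          (Or.inl hjV2) (Or.inr hiW1)
      have hFS₀ : ∀ x ∈ W ∩ V1,
          x ∉ (V2 ∪ {v}) ∪ ((S \ {v}) ∪ {y | y ∈ V1 ∧ G.Adj v y}) := by
        rintro x hx ((hxV2 | hxv) | hxS | hxV1)
        · exact hdisj.ne_of_mem hx.2 hxV2 rfl
        · rw [Set.mem_singleton_iff] at hxv; subst hxv; exact hWS x hx.1 hvS
        · exact hWS x hx.1 hxS.1
        · exact hnod x hx hxV1.2
      have hnodep := refute S' D' hclD hDS'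
        (fun x hx => hDsub (Or.inl hx.2))
        (by
          intro x hx
          refine ⟨fun hxD => hFS₀ x hx (hD'sub hxD), fun hxS' => hFS₀ x hx (Or.inr (hS'sub hxS'))⟩)
      have hS'neS : S' ≠ S := by
        intro hEq
        have hvD' : v ∈ D' := hDsub (Or.inr rfl)
        exact hDS'.ne_of_mem hvD' (hEq ▸ hvS) rfl
      obtain ⟨e, he, hdep⟩ := hLHS S' (Or.inr ⟨_, h2, hmin⟩) hS'neS
      exact hnodep e he hdep
  -- connectivity
  have hconn : (G.induce (W ∩ V1)).Connected := by
    rw [SimpleGraph.connected_iff]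
    refine ⟨?_, ⟨⟨i, hiW1⟩⟩⟩
    by_contra hnp
    rw [SimpleGraph.Preconnected] at hnp; push_neg at hnp
    obtain ⟨a0, b0, hnr⟩ := hnp
    set K : Set (Fin n) :=
      {w | ∃ h : w ∈ W ∩ V1, (G.induce (W ∩ V1)).Reachable a0 ⟨w, h⟩} with hKdef
    have ha0K : ↑a0 ∈ K := ⟨a0.2, by convert SimpleGraph.Reachable.refl a0⟩
    have hb0K : ↑b0 ∉ K := by
      rintro ⟨h, hr⟩
      exact hnr (by convert hr)
    have hKsub : K ⊆ W ∩ V1 := fun x hx => hx.1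
    have hKadj : ∀ w ∈ W ∩ V1, ∀ k ∈ K, G.Adj w k → w ∈ K := by
      rintro w hw k ⟨hk, hr⟩ hadj
      exact ⟨hw, hr.trans (SimpleGraph.Adj.reachable
        (show (G.induce (W ∩ V1)).Adj ⟨k, hk⟩ ⟨w, hw⟩ from hadj.symm))⟩
    obtain ⟨S', D', E', hS'sub, hDsub, hEsub, hD'sub, hE'sub, hclD, hclE, hDS', hES', hDE',
        hFdis, hjD', hmin, h2⟩ :=
      greedy G hG i j ((W ∩ V1) \ K) _
        (S ∪ {x | x ∈ V1 ∧ x ∉ K ∧ ∃ k ∈ K, G.Adj x k}) V2 K le_rfl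
        (by
          intro a ha b hab
          rcases hpart b with hb | hb | hb
          · exact Or.inr (Or.inl hb)
          · exact absurd hab.symm (fun h => hnoedge b hb a ha h)
          · exact Or.inl hb)
        (by
          intro a ha b hab
          have haV1 : a ∈ V1 := (hKsub ha).2
          rcases hpart b with hb | hb | hb
          · exact Or.inr (Or.inl hb)
          · by_cases hbK : b ∈ K
            · exact Or.inl hbK
            · exact Or.inr (Or.inr ⟨hb, hbK, a, ha, hab.symm⟩)
          · exact absurd hab (hnoedge a haV1 b hb))
        (by
          rw [Set.disjoint_left]
          rintro x hx (hxS | hxN)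
          · exact (hV2T hx) hxS
          · exact hdisj.ne_of_mem hxN.1 hx rfl)
        (by
          rw [Set.disjoint_left]
          rintro x hx (hxS | hxN)
          · exact (hV1T (hKsub hx).2) hxS
          · exact hxN.2.1 hx)
        (by
          rw [Set.disjoint_right]
          rintro x hx hxV2
          exact hdisj.ne_of_mem (hKsub hx).2 hxV2 rfl)
        (by
          rw [Set.disjoint_left]
          rintro x hx ((hxV2 | hxK) | hxS | hxN)
          · exact hdisj.ne_of_mem hx.1.2 hxV2 rfl
          · exact hx.2 hxK
          · exact hWS x hx.1.1 hxS
          · obtain ⟨k, hk, hadj⟩ := hxN.2.2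
            exact hx.2 (hKadj x hx.1 k hk hadj))
        hjV2
        (by
          by_cases hiK : i ∈ K
          · exact Or.inl hiK
          · exact Or.inr ⟨hiW1, hiK⟩)
    have hnodep := refute S' D' hclD hDS'
      (fun x hx => hDsub hx.2)
      (by
        intro x hx
        by_cases hxK : x ∈ K
        · have hxE' : x ∈ E' := hEsub hxK
          exact ⟨fun hxD => hDE'.ne_of_mem hxD hxE' rfl,
            fun hxS' => hES'.ne_of_mem hxE' hxS' rfl⟩
        · have hxF : x ∈ (W ∩ V1) \ K := ⟨hx, hxK⟩
          exact ⟨fun hxD => hFdis.ne_of_mem hxF (Or.inl (Or.inl hxD)) rfl,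
            fun hxS' => hFdis.ne_of_mem hxF (Or.inr hxS') rfl⟩)
    have hS'neS : S' ≠ S := by
      intro hEq
      have ha0E' : ↑a0 ∈ E' := hEsub ha0K
      have hb0E' : ↑b0 ∈ E' := by
        refine closed_mem hclE ha0E' ?_
        rw [hEq]
        exact hV1sc ↑a0 a0.2.2 ↑b0 b0.2.2
      exact hFdis.ne_of_mem ⟨b0.2, hb0K⟩ (Or.inl (Or.inr hb0E')) rfl
    obtain ⟨e, he, hdep⟩ := hLHS S' (Or.inr ⟨_, h2, hmin⟩) hS'neS
    exact hnodep e he hdep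
  exact ⟨fun x hx => Or.inl hx.2, hconn, hdom⟩


lemma cross_pair (G : SimpleGraph (Fin n)) (hG : G.Connected)
    (S V1 V2 : Set (Fin n)) (hSne : S.Nonempty) (hcomp : ComponentsOf G S V1 V2)
    (A : Finset (Finset (Fin n)))
    (hsize : ∀ e ∈ A, e.card = 1 ∨ e.card = 2)
    (hout : ∀ e ∈ A, ¬ depM G S ↑e)
    (hLHS : ∀ S' ∈ minSet G, S' ≠ S → ∃ e ∈ A, depM G S' ↑e) :
    ∃ i j, i ∈ V1 ∧ j ∈ V2 ∧ ({i, j} : Finset (Fin n)) ∈ A := by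
  obtain ⟨hUV, hdisj, hV1ne, hV2ne, hV1sc, hV2sc, hV12⟩ := hcomp
  have hpart : ∀ x : Fin n, x ∈ S ∨ x ∈ V1 ∨ x ∈ V2 := by
    intro x
    by_cases h : x ∈ S
    · exact Or.inl h
    · right; have hx : x ∈ Sᶜ := h; rw [← hUV] at hx; exact hx
  have hne : (∅ : Set (Fin n)) ≠ S := by
    intro h; obtain ⟨s, hs⟩ := hSne; rw [← h] at hs; exact hs
  obtain ⟨e, he, hdep⟩ := hLHS ∅ (Or.inl rfl) hne
  rcases hdep with h | ⟨a, b, ha0, hb0, hne', hsc⟩ | h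
  · simp at h
  · have ha := Finset.mem_coe.1 ha0
    have hb := Finset.mem_coe.1 hb0
    have hnsc : ¬ SameComp G Sᶜ a b := fun h =>
      hout e he (Or.inr (Or.inl ⟨a, b, ha0, hb0, hne', h⟩))
    have haS : a ∉ S := fun h => hout e he (Or.inl ⟨a, ha0, h⟩)
    have hbS : b ∉ S := fun h => hout e he (Or.inl ⟨b, hb0, h⟩)
    have heab : e = ({a, b} : Finset (Fin n)) := by
      have hcard : e.card = 2 := by
        rcases hsize e he with h1 | h1
        · obtain ⟨x, rfl⟩ := Finset.card_eq_one.mp h1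
          rw [Finset.mem_singleton] at ha hb
          exact absurd (ha.trans hb.symm) hne'
        · exact h1
      obtain ⟨x, y, hxy, rfl⟩ := Finset.card_eq_two.mp hcard
      rw [Finset.mem_insert, Finset.mem_singleton] at ha hb
      rcases ha with rfl | rfl <;> rcases hb with rfl | rfl
      · exact absurd rfl hne'
      · rfl
      · exact Finset.pair_comm b a
      · exact absurd rfl hne'
    rcases hpart a with h1 | h1 | h1
    · exact absurd h1 haS
    · rcases hpart b with h2 | h2 | h2
      · exact absurd h2 hbS
      · exact absurd (hV1sc a h1 b h2) hnsc
      · exact ⟨a, b, h1, h2, heab ▸ he⟩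
    · rcases hpart b with h2 | h2 | h2
      · exact absurd h2 hbS
      · refine ⟨b, a, h2, h1, ?_⟩
        rw [Finset.pair_comm b a, ← heab]; exact he
      · exact absurd (hV2sc a h1 b h2) hnsc
  · rw [Set.ncard_coe_finset] at h
    rcases hsize e he with h1 | h1 <;> omega

lemma mpr_dir (G : SimpleGraph (Fin n)) (hG : G.Connected)
    (S V1 V2 : Set (Fin n)) (hcomp : ComponentsOf G S V1 V2)
    (A : Finset (Finset (Fin n)))
    (hcd1 : ConnDom G (V1 ∪ S) ((⋃ e ∈ A, (e : Set (Fin n))) ∩ V1))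
    (hcd2 : ConnDom G (V2 ∪ S) ((⋃ e ∈ A, (e : Set (Fin n))) ∩ V2))
    (i j : Fin n) (hiV1 : i ∈ V1) (hjV2 : j ∈ V2)
    (hijA : ({i, j} : Finset (Fin n)) ∈ A) :
    ∀ S' ∈ minSet G, S' ≠ S → ∃ e ∈ A, depM G S' ↑e := by
  obtain ⟨hUV, hdisj, hV1ne, hV2ne, hV1sc, hV2sc, hV12⟩ := hcomp
  set W : Set (Fin n) := ⋃ e ∈ A, (e : Set (Fin n)) with hWdef
  have hmemW : ∀ x : Fin n, x ∈ W ↔ ∃ e ∈ A, x ∈ e := by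
    intro x; simp [hWdef]
  have hV1T : V1 ⊆ Sᶜ := fun x hx => by rw [← hUV]; exact Or.inl hx
  have hV2T : V2 ⊆ Sᶜ := fun x hx => by rw [← hUV]; exact Or.inr hx
  have hpart : ∀ x : Fin n, x ∈ S ∨ x ∈ V1 ∨ x ∈ V2 := by
    intro x
    by_cases h : x ∈ S
    · exact Or.inl h
    · right; have hx : x ∈ Sᶜ := h; rw [← hUV] at hx; exact hx
  have hnoedge : ∀ a ∈ V1, ∀ b ∈ V2, ¬ G.Adj a b := fun a ha b hb h =>
    hV12 a ha b hb (sc_adj (hV1T ha) (hV2T hb) h)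
  have hiW1 : i ∈ W ∩ V1 := ⟨(hmemW i).2 ⟨_, hijA, by simp⟩, hiV1⟩
  have hjW2 : j ∈ W ∩ V2 := ⟨(hmemW j).2 ⟨_, hijA, by simp⟩, hjV2⟩
  have hij_ne : i ≠ j := hdisj.ne_of_mem hiV1 hjV2
  intro S' hS'mem hS'ne
  by_contra hno
  push_neg at hno
  have hno' : ∀ e ∈ A, ¬ depM G S' ↑e := hno
  have hWS' : ∀ x ∈ W, x ∉ S' := by
    intro x hx hxS'
    obtain ⟨e, he, hxe⟩ := (hmemW x).1 hx
    exact hno' e he (Or.inl ⟨x, Finset.mem_coe.2 hxe, hxS'⟩)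
  have hmemij : i ∈ (↑({i, j} : Finset (Fin n)) : Set (Fin n)) := by simp
  have hmemji : j ∈ (↑({i, j} : Finset (Fin n)) : Set (Fin n)) := by simp
  rcases hS'mem with rfl | ⟨k, hk2, hS'cut⟩
  · exact hno' {i, j} hijA (Or.inr (Or.inl ⟨i, j, hmemij, hmemji, hij_ne,
      by rw [Set.compl_empty]; exact sc_univ hG i j⟩))
  · have hsplit : ¬ SameComp G S'ᶜ i j := fun h =>
      hno' {i, j} hijA (Or.inr (Or.inl ⟨i, j, hmemij, hmemji, hij_ne, h⟩))
    have hW1sub : W ∩ V1 ⊆ S'ᶜ := fun x hx => hWS' x hx.1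
    have hW2sub : W ∩ V2 ⊆ S'ᶜ := fun x hx => hWS' x hx.1
    have hW1C1 : ∀ x ∈ W ∩ V1, SameComp G S'ᶜ i x := by
      intro x hx
      have hr := hcd1.2.1.preconnected ⟨i, hiW1⟩ ⟨x, hx⟩
      exact sc_mono hW1sub (sc_of_reach_sub hr)
    have hW2C2 : ∀ x ∈ W ∩ V2, SameComp G S'ᶜ j x := by
      intro x hx
      have hr := hcd2.2.1.preconnected ⟨j, hjW2⟩ ⟨x, hx⟩
      exact sc_mono hW2sub (sc_of_reach_sub hr)
    have hdom1 : ∀ u, u ∈ V1 ∪ S → u ∉ S' → SameComp G S'ᶜ i u := by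
      intro u hu huS'
      by_cases huW : u ∈ W ∩ V1
      · exact hW1C1 u huW
      · obtain ⟨a, ha, hadj⟩ := hcd1.2.2 u hu huW
        exact sc_trans (hW1C1 a ha) (sc_adj (hW1sub ha) huS' hadj.symm)
    have hdom2 : ∀ u, u ∈ V2 ∪ S → u ∉ S' → SameComp G S'ᶜ j u := by
      intro u hu huS'
      by_cases huW : u ∈ W ∩ V2
      · exact hW2C2 u huW
      · obtain ⟨a, ha, hadj⟩ := hcd2.2.2 u hu huW
        exact sc_trans (hW2C2 a ha) (sc_adj (hW2sub ha) huS' hadj.symm)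
    have hC12 : ∀ x, SameComp G S'ᶜ i x → SameComp G S'ᶜ j x → False :=
      fun x h1 h2 => hsplit (sc_trans h1 (sc_symm h2))
    have hSsub : S ⊆ S' := by
      intro s hs; by_contra hsS'
      exact hC12 s (hdom1 s (Or.inr hs) hsS') (hdom2 s (Or.inr hs) hsS')
    obtain ⟨s, hsS', hsS⟩ : ∃ s, s ∈ S' ∧ s ∉ S := by
      rcases Set.exists_of_ssubset (hSsub.ssubset_of_ne (Ne.symm hS'ne)) with ⟨s, h1, h2⟩
      exact ⟨s, h1, h2⟩
    obtain ⟨w1, hw1, w2, hw2, hadj1, hadj2, hww⟩ :=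
      exists_two_comps hsS' (hS'cut.2.2.2 s hsS')
    have hclass : ∀ x ∈ S'ᶜ, SameComp G S'ᶜ i x ∨ SameComp G S'ᶜ j x := by
      intro x hx
      rcases hpart x with h | h | h
      · exact absurd (hSsub h) hx
      · exact Or.inl (hdom1 x (Or.inl h) (by exact hx))
      · exact Or.inr (hdom2 x (Or.inl h) (by exact hx))
    have hkey : (∃ t, G.Adj s t ∧ t ∈ S'ᶜ ∧ SameComp G S'ᶜ j t) ∧
        (∃ t, G.Adj s t ∧ t ∈ S'ᶜ ∧ SameComp G S'ᶜ i t) := by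
      rcases hclass w1 hw1 with h1 | h1 <;> rcases hclass w2 hw2 with h2 | h2
      · exact absurd (sc_trans (sc_symm h1) h2) hww
      · exact ⟨⟨w2, hadj2, hw2, h2⟩, ⟨w1, hadj1, hw1, h1⟩⟩
      · exact ⟨⟨w1, hadj1, hw1, h1⟩, ⟨w2, hadj2, hw2, h2⟩⟩
      · exact absurd (sc_trans (sc_symm h1) h2) hww
    rcases hpart s with h | h | h
    · exact hsS h
    · -- s ∈ V1
      obtain ⟨t, hadjt, htS', htC2⟩ := hkey.1
      have htV2 : t ∈ V2 := by
        rcases hpart t with h' | h' | h'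
        · exact absurd (hSsub h') htS'
        · exact absurd (hdom1 t (Or.inl h') htS') (fun hh => hC12 t hh htC2)
        · exact h'
      exact hnoedge s h t htV2 hadjt
    · -- s ∈ V2
      obtain ⟨t, hadjt, htS', htC1⟩ := hkey.2
      have htV1 : t ∈ V1 := by
        rcases hpart t with h' | h' | h'
        · exact absurd (hSsub h') htS'
        · exact h'
        · exact absurd (hdom2 t (Or.inl h') htS') (fun hh => hC12 t htC1 hh)
      exact hnoedge t htV1 s h hadjt.symm


end StmtAux

/-- characterization of transversals at a minimal cut. -/
theorem stmt17 {n : ℕ} (G : SimpleGraph (Fin n)) (hG : G.Connected)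
    (S V1 V2 : Set (Fin n)) (hcut : IsMinKCut G S 2) (hcomp : ComponentsOf G S V1 V2)
    (A : Finset (Finset (Fin n)))
    (hsize : ∀ e ∈ A, e.card = 1 ∨ e.card = 2)
    (hout : ∀ e ∈ A, ¬ depM G S ↑e) :
    (∀ S' ∈ minSet G, S' ≠ S → ∃ e ∈ A, depM G S' ↑e) ↔
      ((ConnDom G (V1 ∪ S) ((⋃ e ∈ A, (e : Set (Fin n))) ∩ V1) ∧
        ConnDom G (V2 ∪ S) ((⋃ e ∈ A, (e : Set (Fin n))) ∩ V2)) ∧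
       ∃ i j : Fin n, i ∈ V1 ∧ j ∈ V2 ∧ ({i, j} : Finset (Fin n)) ∈ A) := by
  constructor
  · intro hLHS
    obtain ⟨i, j, hiV1, hjV2, hijA⟩ :=
      StmtAux.cross_pair G hG S V1 V2 hcut.1 hcomp A hsize hout hLHS
    have hcomp' : ComponentsOf G S V2 V1 := by
      obtain ⟨hUV, hdisj, h1, h2, h3, h4, h5⟩ := hcomp
      exact ⟨by rw [Set.union_comm]; exact hUV, hdisj.symm, h2, h1, h4, h3,
        fun a ha b hb h => h5 b hb a ha (StmtAux.sc_symm h)⟩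
    refine ⟨⟨StmtAux.connDom_side G hG S V1 V2 hcomp A hsize hout hLHS i j hiV1 hjV2 hijA,
      StmtAux.connDom_side G hG S V2 V1 hcomp' A hsize hout hLHS j i hjV2 hiV1
        (by rw [Finset.pair_comm]; exact hijA)⟩, i, j, hiV1, hjV2, hijA⟩
  · rintro ⟨⟨hcd1, hcd2⟩, i, j, hiV1, hjV2, hijA⟩
    exact StmtAux.mpr_dir G hG S V1 V2 hcomp A hcd1 hcd2 i j hiV1 hjV2 hijA
end

section
/- Let G be a connected graph on [n], G ≠ K_n. A collection A of singletons and pairs of elements of [n] (with all pairs of size exactly 2 and all elements distinct from loops) is a transversal of the collection {D(M(S'))\D(M(∅)) : S' ∈ min(G)\{∅}} if and only if the set of singletons A₁ (viewed as a subset of [n]) is a connected dominating set of G. Here D(M(∅)) consists of all subsets of [n] of size ≥ 2 (since G is connected), so D(M(S'))\D(M(∅)) = S' (the set of loops, viewed as singletons). -/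
open MvPolynomial

variable {n : ℕ}

section Stmt18Aux

variable {G : SimpleGraph (Fin n)}

/-- Inclusion homomorphism between induced subgraphs. -/
private def inclHom (G : SimpleGraph (Fin n)) {T T' : Set (Fin n)} (h : T ⊆ T') :
    G.induce T →g G.induce T' where
  toFun := fun x => ⟨x.1, h x.2⟩
  map_rel' := fun hab => hab

private lemma sameComp_univ (hG : G.Connected) (a b : Fin n) :
    SameComp G Set.univ a b := by
  refine ⟨trivial, trivial, ?_⟩
  exact (hG.preconnected a b).map
    (⟨fun x => ⟨x, trivial⟩, fun hab => hab⟩ : G →g G.induce Set.univ)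

private lemma walk_avoid {T : Set (Fin n)} {i : Fin n} :
    ∀ {a b : ↑(T ∪ {i})} (p : (G.induce (T ∪ {i})).Walk a b),
      (∀ x ∈ p.support, (x : Fin n) ≠ i) → ∀ (ha : (a : Fin n) ∈ T) (hb : (b : Fin n) ∈ T),
      (G.induce T).Reachable ⟨a, ha⟩ ⟨b, hb⟩ := by
  intro a b p
  induction p with
  | nil =>
    intro _ ha hb
    exact SimpleGraph.Reachable.refl _
  | @cons a c b h q ih =>
    intro hsup ha hb
    have hcne : (c : Fin n) ≠ i := by
      apply hsup
      rw [SimpleGraph.Walk.support_cons]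
      exact List.mem_cons_of_mem _ q.start_mem_support
    have hc : (c : Fin n) ∈ T := by
      rcases c.2 with hc | hc
      · exact hc
      · exact absurd hc hcne
    have hadj : (G.induce T).Adj ⟨a, ha⟩ ⟨c, hc⟩ := h
    refine hadj.reachable.trans (ih ?_ hc hb)
    intro x hx
    apply hsup
    rw [SimpleGraph.Walk.support_cons]
    exact List.mem_cons_of_mem _ hx

private lemma exists_adj_of_reachable {V : Type*} {H : SimpleGraph V} {a b : V}
    (h : H.Reachable a b) (hne : a ≠ b) : ∃ c, H.Adj a c := by
  obtain ⟨p⟩ := h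
  cases p with
  | nil => exact absurd rfl hne
  | cons h q => exact ⟨_, h⟩

private lemma numComp_drop {T : Set (Fin n)} {i u v : Fin n}
    (hi : i ∉ T) (hu : u ∈ T) (hv : v ∈ T)
    (hnr : ¬ SameComp G T u v) (hr : SameComp G (T ∪ {i}) u v) :
    numComp G (T ∪ {i}) < numComp G T := by
  classical
  set T' := T ∪ {i} with hT'def
  have hsub : T ⊆ T' := Set.subset_union_left
  haveI : Finite (G.induce T).ConnectedComponent := Quot.finite _
  haveI : Finite (G.induce T').ConnectedComponent := Quot.finite _
  let φ : (G.induce T).ConnectedComponent → (G.induce T').ConnectedComponent :=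
    SimpleGraph.ConnectedComponent.map (inclHom G hsub)
  obtain ⟨hu', hv', hruv⟩ := hr
  have hmkne : (G.induce T).connectedComponentMk ⟨u, hu⟩ ≠
      (G.induce T).connectedComponentMk ⟨v, hv⟩ := by
    intro hEq
    exact hnr ⟨hu, hv, SimpleGraph.ConnectedComponent.exact hEq⟩
  have hφeq : φ ((G.induce T).connectedComponentMk ⟨u, hu⟩) =
      φ ((G.induce T).connectedComponentMk ⟨v, hv⟩) :=
    SimpleGraph.ConnectedComponent.sound hruv
  have hninj : ¬ Function.Injective φ := fun hinj => hmkne (hinj hφeq)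
  have hiT' : i ∈ T' := Or.inr rfl
  have hsurj : Function.Surjective φ := by
    intro c
    obtain ⟨x, rfl⟩ := c.exists_rep
    by_cases hxi : (x : Fin n) = i
    · obtain ⟨p⟩ := hruv
      have hall : ¬ (∀ y ∈ p.support, (y : Fin n) ≠ i) := by
        intro hy
        exact hnr ⟨hu, hv, walk_avoid p hy hu hv⟩
      push_neg at hall
      obtain ⟨y, hy, hyi⟩ := hall
      have hysup : (⟨i, hiT'⟩ : ↑T') ∈ p.support := by
        have hyy : y = ⟨i, hiT'⟩ := Subtype.ext hyi
        rwa [hyy] at hy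
      have hreach : (G.induce T').Reachable ⟨u, hu'⟩ ⟨i, hiT'⟩ := ⟨p.takeUntil _ hysup⟩
      have hneiu : (⟨i, hiT'⟩ : ↑T') ≠ ⟨u, hu'⟩ := by
        intro hEq
        apply hi
        rw [show i = u from congrArg Subtype.val hEq]
        exact hu
      obtain ⟨c, hc⟩ := exists_adj_of_reachable hreach.symm hneiu
      have hci : (c : Fin n) ≠ i := by
        intro hEq
        exact (G.induce T').irrefl (show (G.induce T').Adj ⟨i, hiT'⟩ ⟨i, hiT'⟩ by
          rwa [show c = (⟨i, hiT'⟩ : ↑T') from Subtype.ext hEq] at hc)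
      have hcT : (c : Fin n) ∈ T := by
        rcases c.2 with h' | h'
        · exact h'
        · exact absurd h' hci
      refine ⟨(G.induce T).connectedComponentMk ⟨c, hcT⟩, ?_⟩
      have h1 : φ ((G.induce T).connectedComponentMk ⟨c, hcT⟩) =
          (G.induce T').connectedComponentMk c := by
        have hcc : (inclHom G hsub ⟨c, hcT⟩ : ↑T') = c := Subtype.ext rfl
        rw [show φ ((G.induce T).connectedComponentMk ⟨c, hcT⟩) =
          (G.induce T').connectedComponentMk (inclHom G hsub ⟨c, hcT⟩) from rfl, hcc]
      rw [h1]
      have hx' : x = ⟨i, hiT'⟩ := Subtype.ext hxi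
      rw [hx']
      exact SimpleGraph.ConnectedComponent.sound hc.reachable.symm
    · have hxT : (x : Fin n) ∈ T := by
        rcases x.2 with h' | h'
        · exact h'
        · exact absurd h' hxi
      refine ⟨(G.induce T).connectedComponentMk ⟨x, hxT⟩, ?_⟩
      have hcc : (inclHom G hsub ⟨x, hxT⟩ : ↑T') = x := Subtype.ext rfl
      rw [show φ ((G.induce T).connectedComponentMk ⟨x, hxT⟩) =
        (G.induce T').connectedComponentMk (inclHom G hsub ⟨x, hxT⟩) from rfl, hcc]
      rfl
  have hle : numComp G T' ≤ numComp G T := Nat.card_le_card_of_surjective φ hsurj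
  rcases lt_or_eq_of_le hle with h | h
  · exact h
  · exfalso
    exact hninj ((Nat.bijective_iff_surjective_and_card φ).mpr ⟨hsurj, h.symm⟩).injective

private lemma exists_minCut (hG : G.Connected) {S₀ : Set (Fin n)} {u v : Fin n}
    (hu : u ∉ S₀) (hv : v ∉ S₀) (hnr : ¬ SameComp G S₀ᶜ u v) :
    ∃ S : Set (Fin n), S ⊆ S₀ ∧ S ∈ minSet G ∧ S ≠ ∅ := by
  classical
  set 𝒮 : Set (Finset (Fin n)) := {F | ↑F ⊆ S₀ ∧ ¬ SameComp G (↑F : Set (Fin n))ᶜ u v}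
    with h𝒮def
  have h𝒮ne : 𝒮.Nonempty := by
    refine ⟨S₀.toFinite.toFinset, ?_, ?_⟩
    · rw [Set.Finite.coe_toFinset]
    · rw [Set.Finite.coe_toFinset]; exact hnr
  obtain ⟨F, hF, hmin⟩ := (Finset.isWellFounded_ssubset (α := Fin n)).wf.has_min 𝒮 h𝒮ne
  obtain ⟨hFsub, hFnr⟩ := hF
  have huF : u ∉ (↑F : Set (Fin n)) := fun h => hu (hFsub h)
  have hvF : v ∉ (↑F : Set (Fin n)) := fun h => hv (hFsub h)
  have hFne : (↑F : Set (Fin n)) ≠ ∅ := by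
    intro h
    apply hFnr
    rw [h, Set.compl_empty]
    exact sameComp_univ hG u v
  have hmemcompl : u ∈ (↑F : Set (Fin n))ᶜ := huF
  have hmemcompl' : v ∈ (↑F : Set (Fin n))ᶜ := hvF
  haveI : Finite (G.induce (↑F : Set (Fin n))ᶜ).ConnectedComponent := Quot.finite _
  have hk2 : 2 ≤ numComp G (↑F : Set (Fin n))ᶜ := by
    have hne : (G.induce (↑F : Set (Fin n))ᶜ).connectedComponentMk ⟨u, hmemcompl⟩ ≠
        (G.induce (↑F : Set (Fin n))ᶜ).connectedComponentMk ⟨v, hmemcompl'⟩ := by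
      intro hEq
      exact hFnr ⟨hmemcompl, hmemcompl', SimpleGraph.ConnectedComponent.exact hEq⟩
    haveI := nontrivial_of_ne _ _ hne
    exact Finite.one_lt_card_iff_nontrivial.mpr this
  have hmincut : IsMinKCut G ↑F (numComp G (↑F : Set (Fin n))ᶜ) := by
    refine ⟨Set.nonempty_iff_ne_empty.mpr hFne, ?_, rfl, ?_⟩
    · intro h
      exact huF (h ▸ Set.mem_univ u)
    · intro i hiF
      have hFi : F.erase i ∈ 𝒮 → False := by
        intro hmem
        exact hmin _ hmem (Finset.erase_ssubset hiF)
      have hsub' : (↑(F.erase i) : Set (Fin n)) ⊆ S₀ := by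
        intro x hx
        exact hFsub (Finset.erase_subset i F hx)
      have hr : SameComp G (↑(F.erase i) : Set (Fin n))ᶜ u v := by
        by_contra hcon
        exact hFi ⟨hsub', hcon⟩
      have hcompl : (↑(F.erase i) : Set (Fin n))ᶜ = (↑F : Set (Fin n))ᶜ ∪ {i} := by
        ext x
        simp only [Set.mem_compl_iff, Finset.coe_erase, Set.mem_diff, Set.mem_union,
          Set.mem_singleton_iff, Finset.mem_coe]
        by_cases hx : x = i <;> simp [hx]
      rw [hcompl] at hr
      exact numComp_drop (fun h => h hiF) hmemcompl hmemcompl' hFnr hr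
  exact ⟨↑F, hFsub, Or.inr ⟨_, hk2, hmincut⟩, hFne⟩

private lemma depM_singleton {S : Set (Fin n)} {x : Fin n} :
    depM G S (↑({x} : Finset (Fin n))) ↔ x ∈ S := by
  constructor
  · rintro (⟨y, hy1, hy2⟩ | ⟨a, b, ha, hb, hab, -⟩ | h3)
    · simp only [Finset.coe_singleton, Set.mem_singleton_iff] at hy1
      exact hy1 ▸ hy2
    · simp only [Finset.coe_singleton, Set.mem_singleton_iff] at ha hb
      exact absurd (ha.trans hb.symm) hab
    · simp [Set.ncard_singleton] at h3
  · intro h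
    exact Or.inl ⟨x, by simp, h⟩

private lemma singleton_mem_of_mem_A1set {A : Finset (Finset (Fin n))} {x : Fin n}
    (h : x ∈ A1set A) : {x} ∈ A := by
  simp only [A1set, Finset.mem_biUnion, Finset.mem_filter, id] at h
  obtain ⟨e, ⟨heA, hcard⟩, hxe⟩ := h
  obtain ⟨y, rfl⟩ := Finset.card_eq_one.mp hcard
  obtain rfl : y = x := (Finset.mem_singleton.mp hxe).symm
  exact heA

private lemma mem_A1set_of_singleton {A : Finset (Finset (Fin n))} {x : Fin n}
    (h : {x} ∈ A) : x ∈ A1set A := by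
  simp only [A1set, Finset.mem_biUnion, Finset.mem_filter, id]
  exact ⟨{x}, ⟨h, Finset.card_singleton x⟩, Finset.mem_singleton_self x⟩

end Stmt18Aux

/-- transversals for `S = ∅` are exactly the connected dominating sets. -/
theorem stmt18 {n : ℕ} (G : SimpleGraph (Fin n)) (hG : G.Connected) (hne : G ≠ ⊤)
    (A : Finset (Finset (Fin n)))
    (hsize : ∀ e ∈ A, e.card = 1 ∨ e.card = 2)
    (hout : ∀ e ∈ A, ¬ depM G ∅ ↑e) :
    (∀ S' ∈ minSet G, S' ≠ ∅ → ∃ e ∈ A, depM G S' ↑e) ↔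
      ConnDom G Set.univ ↑(A1set A) := by
  classical
  have hsing : ∀ e ∈ A, e.card = 1 := by
    intro e he
    rcases hsize e he with h | h
    · exact h
    · exfalso
      apply hout e he
      obtain ⟨a, b, hab, rfl⟩ := Finset.card_eq_two.mp h
      refine Or.inr (Or.inl ⟨a, b, by simp, by simp, hab, ?_⟩)
      rw [Set.compl_empty]
      exact sameComp_univ hG a b
  constructor
  · -- transversal → connected dominating set
    intro htr
    by_contra hnc
    -- In every failure case we produce a separator `S₀` disjoint from `A1set A`.
    have key : ∀ (S₀ : Set (Fin n)) (u v : Fin n), u ∉ S₀ → v ∉ S₀ →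
        ¬ SameComp G S₀ᶜ u v → (∀ x ∈ A1set A, x ∉ S₀) → False := by
      intro S₀ u v hu hv hnr hdisj
      obtain ⟨S, hSsub, hSmem, hSne⟩ := exists_minCut hG hu hv hnr
      obtain ⟨e, heA, hdep⟩ := htr S hSmem hSne
      obtain ⟨x, rfl⟩ := Finset.card_eq_one.mp (hsing e heA)
      have hxS : x ∈ S := depM_singleton.mp hdep
      exact hdisj x (mem_A1set_of_singleton heA) (hSsub hxS)
    rcases Finset.eq_empty_or_nonempty (A1set A) with hA1e | ⟨a₀, ha₀⟩
    · -- `A1set A` is empty: use a non-adjacent pair of vertices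
      have hnadj : ∃ u v : Fin n, u ≠ v ∧ ¬ G.Adj u v := by
        by_contra hcon
        push_neg at hcon
        apply hne
        ext a b
        simp only [SimpleGraph.top_adj]
        exact ⟨fun h => h.ne, fun h => hcon a b h⟩
      obtain ⟨u, v, huv, hnadjuv⟩ := hnadj
      refine key ({u, v} : Set (Fin n))ᶜ u v (by simp) (by simp) ?_
        (fun x hx => by rw [hA1e] at hx; exact absurd hx (Finset.notMem_empty x))
      rw [compl_compl]
      rintro ⟨hu', hv', hr⟩
      have hne' : (⟨u, hu'⟩ : ↑({u, v} : Set (Fin n))) ≠ ⟨v, hv'⟩ := by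
        intro hEq
        exact huv (congrArg Subtype.val hEq)
      obtain ⟨c, hc⟩ := exists_adj_of_reachable hr hne'
      have hadj : G.Adj u (c : Fin n) := hc
      rcases c.2 with hcm | hcm
      · exact G.irrefl (hcm ▸ hadj)
      · exact hnadjuv (hcm ▸ hadj)
    · -- `A1set A` is nonempty
      by_cases hdom : ∀ w : Fin n, w ∉ (↑(A1set A) : Set (Fin n)) →
          ∃ a ∈ (↑(A1set A) : Set (Fin n)), G.Adj w a
      · -- dominating, so connectivity must fail
        haveI : Nonempty ↥(↑(A1set A) : Set (Fin n)) := ⟨⟨a₀, ha₀⟩⟩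
        have hpre : ¬ (G.induce (↑(A1set A) : Set (Fin n))).Preconnected := by
          intro hp
          exact hnc ⟨Set.subset_univ _, ⟨hp⟩, fun w _ hw => hdom w hw⟩
        have hxy : ∃ x y : ↥(↑(A1set A) : Set (Fin n)),
            ¬ (G.induce (↑(A1set A) : Set (Fin n))).Reachable x y := by
          by_contra hcon
          push_neg at hcon
          exact hpre fun a b => hcon a b
        obtain ⟨x, y, hxy⟩ := hxy
        refine key (↑(A1set A) : Set (Fin n))ᶜ x.1 y.1 (fun h => h x.2) (fun h => h y.2) ?_
          (fun z hz h => h hz)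
        rw [compl_compl]
        rintro ⟨hx', hy', hr⟩
        exact hxy hr
      · -- domination fails
        push_neg at hdom
        obtain ⟨w, hwA1, hwnadj⟩ := hdom
        refine key (G.neighborSet w) w a₀ (fun h => G.irrefl h) (hwnadj a₀ ha₀) ?_
          (fun z hz h => hwnadj z hz h)
        rintro ⟨hw', ha', hr⟩
        have hne' : (⟨w, hw'⟩ : ↥(G.neighborSet w)ᶜ) ≠ ⟨a₀, ha'⟩ := by
          intro hEq
          apply hwA1
          rw [show w = a₀ from congrArg Subtype.val hEq]
          exact ha₀
        obtain ⟨c, hc⟩ := exists_adj_of_reachable hr hne'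
        exact c.2 (hc : G.Adj w (c : Fin n))
  · -- connected dominating set → transversal
    intro hcd S' hS' hSne
    rcases hS' with rfl | ⟨k, hk2, hSne', hSnu, hcount, hmin⟩
    · exact absurd rfl hSne
    obtain ⟨-, hconn, hdom⟩ := hcd
    obtain ⟨⟨a₀, ha₀⟩⟩ := hconn.nonempty
    by_cases hint : ∃ a ∈ A1set A, a ∈ S'
    · obtain ⟨a, haA, haS⟩ := hint
      exact ⟨{a}, singleton_mem_of_mem_A1set haA, depM_singleton.mpr haS⟩
    · push_neg at hint
      exfalso
      have hA1sub : (↑(A1set A) : Set (Fin n)) ⊆ S'ᶜ := fun x hx => hint x hx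
      have hcomp : ∀ x (hx : x ∈ (↑(A1set A) : Set (Fin n))),
          (G.induce S'ᶜ).connectedComponentMk ⟨x, hA1sub hx⟩ =
          (G.induce S'ᶜ).connectedComponentMk ⟨a₀, hA1sub ha₀⟩ := by
        intro x hx
        apply SimpleGraph.ConnectedComponent.sound
        exact (hconn.preconnected ⟨x, hx⟩ ⟨a₀, ha₀⟩).map (inclHom G hA1sub)
      haveI : Finite (G.induce S'ᶜ).ConnectedComponent := Quot.finite _
      have h2 : 1 < Nat.card (G.induce S'ᶜ).ConnectedComponent := by
        have : numComp G S'ᶜ = k := hcount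
        calc 1 < 2 := one_lt_two
        _ ≤ k := hk2
        _ = Nat.card (G.induce S'ᶜ).ConnectedComponent := this.symm
      haveI := Finite.one_lt_card_iff_nontrivial.mp h2
      obtain ⟨c, hc⟩ := exists_ne ((G.induce S'ᶜ).connectedComponentMk ⟨a₀, hA1sub ha₀⟩)
      obtain ⟨v, hv⟩ := c.exists_rep
      have hvA1 : (v : Fin n) ∉ (↑(A1set A) : Set (Fin n)) := by
        intro hmem
        apply hc
        rw [← hv]
        have h1 := hcomp v hmem
        have h2 : (⟨(v : Fin n), hA1sub hmem⟩ : ↥S'ᶜ) = v := Subtype.ext rfl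
        rwa [h2] at h1
      obtain ⟨a, haA1, hadj⟩ := hdom v (Set.mem_univ _) hvA1
      apply hc
      rw [← hv]
      have hadj' : (G.induce S'ᶜ).Adj v ⟨a, hA1sub haA1⟩ := hadj
      exact (SimpleGraph.ConnectedComponent.sound hadj'.reachable).trans (hcomp a haA1)
end

section
/- Let n ≥ 3 and let S ⊆ [n] be a set of vertices of the cycle C_n with |S| ≥ 2 and no two elements cyclically adjacent, and suppose the complement of S contains at least two singleton intervals {r} and {s}. Then the permutation σ of [n] defined by σ(r) = n, σ(s) = 1, with σ strictly increasing along the cyclic path from s to r in the increasing direction and strictly increasing along the cyclic path from s to r in the decreasing direction, satisfies all five S-consistency conditions (i)–(v) of Definition: monotonicity constraints relating σ-values at interval endpoints b_j, a_{j+1} and their interval neighbors, and strict monotonicity of σ on every interval of size ≥ 3. -/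
open MvPolynomial

variable {n : ℕ}

/-! Along the cycle, the ascents `σ x < σ (x + 1)` of `σ` are exactly the points of the arc
`[s, r)`, so `σ` changes direction only at `r` and `s`. Every condition of `S`-consistency asks
`σ` to keep its direction through a point `x` that is not a singleton interval `{x}` of `Sᶜ`,
and `r`, `s` are singleton intervals. -/

section

variable [NeZero n]

namespace Fin

lemma one_ne_zero_of_ne {a b : Fin n} (h : a ≠ b) : (1 : Fin n) ≠ 0 := by
  have : Nontrivial (Fin n) := ⟨⟨a, b, h⟩⟩
  open Fin.CommRing in exact one_ne_zero

lemma val_sub_one_sub_of_ne {x s : Fin n} (h : x ≠ s) : (x - 1 - s).val = (x - s).val - 1 := by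
  rw [sub_right_comm, val_sub_one_of_ne_zero (sub_ne_zero.2 h)]

lemma val_sub_swap_of_ne {x s : Fin n} (h : x ≠ s) : (s - x).val = n - (x - s).val := by
  rw [← neg_sub, val_neg, if_neg (sub_ne_zero.2 h)]

end Fin

def IsSingletonInterval (S : Set (Fin n)) (x : Fin n) : Prop :=
  x ∉ S ∧ x - 1 ∈ S ∧ x + 1 ∈ S

theorem sConsistent_of_turns_subset_singletonIntervals {S : Set (Fin n)} {σ : Equiv.Perm (Fin n)}
    (hturn : ∀ x, ¬IsSingletonInterval S x → (σ (x - 1) < σ x ↔ σ x < σ (x + 1))) :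
    SConsistent n S σ := by
  have gt_of_not_lt : ∀ a b, b ≠ a → ¬σ a < σ b → σ b < σ a := fun a b hab h =>
    (lt_or_gt_of_ne (σ.injective.ne hab.symm)).resolve_left h
  refine ⟨fun x hx hx1 => ?_, fun y hm _ _ => hturn y fun h => hm h.2.1⟩
  have h1 : (1 : Fin n) ≠ 0 := fun h => hx (by simpa [h] using hx1)
  have hx_pred : x - 1 ≠ x := fun h => h1 (sub_eq_self.1 h)
  have hx_succ : x + 1 ≠ x := add_ne_left.2 h1
  rw [show x + 2 = x + 1 + 1 by grind, show x + 3 = x + 1 + 1 + 1 by grind]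
  set y := x + 1
  have hxy : x = y - 1 := by simp [y]
  have mid : σ x < σ y ↔ σ y < σ (y + 1) := hxy ▸ hturn y fun h => h.1 hx1
  have next (h3 : y + 1 + 1 ∉ S) : σ y < σ (y + 1) ↔ σ (y + 1) < σ (y + 1 + 1) := by
    simpa using hturn (y + 1) fun h => h3 h.2.2
  have prev (hm : x - 1 ∉ S) : σ (x - 1) < σ x ↔ σ x < σ y := hturn x fun h => hm h.2.1
  by_cases hup : σ x < σ y
  · have hlt : σ x < σ (y + 1) := hup.trans (mid.1 hup)
    exact ⟨fun _ h3 => (next h3).1 (mid.1 hup), fun _ hm => (prev hm).2 hup,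
      fun h => absurd h hlt.asymm, fun h => absurd h hlt.asymm⟩
  · have hdown : ¬σ y < σ (y + 1) := mt mid.2 hup
    have hgt : σ (y + 1) < σ x :=
      (gt_of_not_lt _ _ (add_ne_left.2 h1) hdown).trans (gt_of_not_lt _ _ hx_succ hup)
    exact ⟨fun h => absurd h hgt.asymm, fun h => absurd h hgt.asymm,
      fun _ h3 => gt_of_not_lt _ _ (add_ne_left.2 h1) (mt (next h3).2 hdown),
      fun _ hm => gt_of_not_lt _ _ hx_pred.symm (mt (prev hm).1 hup)⟩

theorem lt_apply_add_one_iff {σ : Equiv.Perm (Fin n)} {r s : Fin n} (hrs : r ≠ s)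
    (hmax : ∀ x, x ≠ r → σ x < σ r) (hmin : ∀ x, x ≠ s → σ s < σ x)
    (hinc : ∀ x : Fin n, (x - s).val < (r - s).val → σ x < σ (x + 1))
    (hdec : ∀ x : Fin n, (s - x).val < (s - r).val → σ x < σ (x - 1)) (x : Fin n) :
    σ x < σ (x + 1) ↔ (x - s).val < (r - s).val := by
  refine ⟨fun hup => ?_, hinc x⟩
  by_contra! hge
  have h1 := Fin.one_ne_zero_of_ne hrs
  refine hup.not_gt ?_
  by_cases hxr : x = r
  · subst hxr
    exact hmax _ (add_ne_left.2 h1)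
  by_cases hys : x + 1 = s
  · rw [hys]
    exact hmin x fun h => h1 (by simpa [h] using hys)
  have hdx : (x - s).val ≠ (r - s).val := fun h => hxr (sub_left_inj.1 (Fin.ext h))
  have hd := Fin.val_sub_one_sub_of_ne hys
  rw [add_sub_cancel_right] at hd
  simpa using hdec (x + 1) (by rw [Fin.val_sub_swap_of_ne hys, Fin.val_sub_swap_of_ne hrs]; omega)

end

theorem stmt19_general {n : ℕ} [NeZero n] (S : Set (Fin n))
    (r s : Fin n) (hrs : r ≠ s)
    (hr : r ∉ S ∧ r - 1 ∈ S ∧ r + 1 ∈ S)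
    (hs : s ∉ S ∧ s - 1 ∈ S ∧ s + 1 ∈ S)
    (σ : Equiv.Perm (Fin n))
    (hmax : ∀ x : Fin n, x ≠ r → σ x < σ r)
    (hmin : ∀ x : Fin n, x ≠ s → σ s < σ x)
    (hinc : ∀ x : Fin n, (x - s).val < (r - s).val → σ x < σ (x + 1))
    (hdec : ∀ x : Fin n, (s - x).val < (s - r).val → σ x < σ (x - 1)) :
    SConsistent n S σ := by
  have ascent_iff := lt_apply_add_one_iff hrs hmax hmin hinc hdec
  refine sConsistent_of_turns_subset_singletonIntervals fun x hx => ?_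
  have hxr : x ≠ r := by rintro rfl; exact hx hr
  have hxs : x ≠ s := by rintro rfl; exact hx hs
  have hdx : (x - s).val ≠ (r - s).val := fun h => hxr (sub_left_inj.1 (Fin.ext h))
  have prev := ascent_iff (x - 1)
  rw [sub_add_cancel, Fin.val_sub_one_sub_of_ne hxs] at prev
  rw [prev, ascent_iff x]
  omega

/-- the explicit permutation with `σ(r) = n`, `σ(s) = 1`, increasing along
both cyclic paths from `s` to `r`, is `S`-consistent. -/
theorem stmt19 {n : ℕ} [NeZero n] (hn : 3 ≤ n) (S : Set (Fin n))
    (hcard : 2 ≤ S.ncard) (hind : ∀ x ∈ S, x + 1 ∉ S)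
    (r s : Fin n) (hrs : r ≠ s)
    (hr : r ∉ S ∧ r - 1 ∈ S ∧ r + 1 ∈ S)
    (hs : s ∉ S ∧ s - 1 ∈ S ∧ s + 1 ∈ S)
    (σ : Equiv.Perm (Fin n))
    (hmax : ∀ x : Fin n, x ≠ r → σ x < σ r)
    (hmin : ∀ x : Fin n, x ≠ s → σ s < σ x)
    (hinc : ∀ x : Fin n, (x - s).val < (r - s).val → σ x < σ (x + 1))
    (hdec : ∀ x : Fin n, (s - x).val < (s - r).val → σ x < σ (x - 1)) :
    SConsistent n S σ :=
  stmt19_general S r s hrs hr hs σ hmax hmin hinc hdec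
end
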